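/- arXiv:2603.14234 — 6 statements merged into one kernel-verified Lean document; each statement's English description precedes it below -/
import Mathlib

section
/- Assume a(2) = 0. Then for every integer n ≥ 3, the distribution relation π_n(ξ_{2^n}) = −ν_{n−2}(ξ_{2^{n−2}}) + S(1/2)·τ_{2^{n−1}} holds in the group ring ℚ[(ℤ/2^{n−1}ℤ)ˣ]. -/
open Finset

/-- The modular element `ξ_{2^n} = ∑_{k ∈ (ℤ/2^nℤ)ˣ} S(k/2^n)·σ_k` in the group ring
of `(ℤ/2^nℤ)ˣ`. -/
noncomputable def xiElt (S : ℚ → ℝ) (n : ℕ) : MonoidAlgebra ℝ (ZMod (2 ^ n))ˣ :=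
  ∑ k : (ZMod (2 ^ n))ˣ,
    MonoidAlgebra.single k (S (((k : ZMod (2 ^ n)).val : ℚ) / (2 ^ n : ℚ)))

/-- The trace element `τ_{2^n} = ∑_{σ ∈ (ℤ/2^nℤ)ˣ} σ`. -/
noncomputable def tauElt (n : ℕ) : MonoidAlgebra ℝ (ZMod (2 ^ n))ˣ :=
  ∑ k : (ZMod (2 ^ n))ˣ, MonoidAlgebra.single k (1 : ℝ)

/-- The reduction map `(ℤ/2^{n+1}ℤ)ˣ → (ℤ/2^nℤ)ˣ`. -/
def projUnits (n : ℕ) : (ZMod (2 ^ (n + 1)))ˣ →* (ZMod (2 ^ n))ˣ :=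
  Units.map (ZMod.castHom (pow_dvd_pow 2 (Nat.le_succ n)) (ZMod (2 ^ n))).toMonoidHom

/-- The map `π` on group rings induced by reduction modulo `2^n`. -/
noncomputable def piMap (n : ℕ) (f : MonoidAlgebra ℝ (ZMod (2 ^ (n + 1)))ˣ) :
    MonoidAlgebra ℝ (ZMod (2 ^ n))ˣ :=
  MonoidAlgebra.mapDomain (projUnits n) f

/-- The map `ν` on group rings sending a group element to the sum of its preimages under
reduction modulo `2^n`. -/
noncomputable def nuMap (n : ℕ) (f : MonoidAlgebra ℝ (ZMod (2 ^ n))ˣ) :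
    MonoidAlgebra ℝ (ZMod (2 ^ (n + 1)))ˣ :=
  ∑ g : (ZMod (2 ^ (n + 1)))ˣ, MonoidAlgebra.single g (f.coeff (projUnits n g))

/-! ### Auxiliary lemmas -/

lemma lift2_coprime (k : ℕ) (g : (ZMod (2 ^ (k + 1)))ˣ) (b : Fin 2) :
    Nat.Coprime ((g : ZMod (2 ^ (k + 1))).val + (b : ℕ) * 2 ^ (k + 1)) (2 ^ (k + 2)) := by
  have h1 : Nat.Coprime (g : ZMod (2 ^ (k + 1))).val (2 ^ (k + 1)) :=
    ZMod.val_coe_unit_coprime g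
  have h2 : Nat.Coprime (g : ZMod (2 ^ (k + 1))).val 2 :=
    Nat.Coprime.coprime_dvd_right (dvd_pow_self 2 (Nat.succ_ne_zero k)) h1
  have h3 : Nat.Coprime ((g : ZMod (2 ^ (k + 1))).val + (b : ℕ) * 2 ^ (k + 1)) 2 := by
    have h : (b : ℕ) * 2 ^ (k + 1) = 2 * ((b : ℕ) * 2 ^ k) := by ring
    rw [h]
    exact (Nat.coprime_add_mul_left_left _ 2 _).mpr h2
  exact Nat.Coprime.pow_right _ h3

/-- The lift of a unit `g` mod `2^{k+1}` to a unit mod `2^{k+2}`, with high bit `b`. -/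
noncomputable def lift2 (k : ℕ) (g : (ZMod (2 ^ (k + 1)))ˣ) (b : Fin 2) :
    (ZMod (2 ^ (k + 2)))ˣ :=
  ZMod.unitOfCoprime _ (lift2_coprime k g b)

lemma lift2_val (k : ℕ) (g : (ZMod (2 ^ (k + 1)))ˣ) (b : Fin 2) :
    ((lift2 k g b : ZMod (2 ^ (k + 2)))).val
      = (g : ZMod (2 ^ (k + 1))).val + (b : ℕ) * 2 ^ (k + 1) := by
  have hlt : (g : ZMod (2 ^ (k + 1))).val + (b : ℕ) * 2 ^ (k + 1) < 2 ^ (k + 2) := by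
    have h1 : (g : ZMod (2 ^ (k + 1))).val < 2 ^ (k + 1) := ZMod.val_lt _
    have h2 : (b : ℕ) ≤ 1 := Nat.lt_succ_iff.mp b.2
    have h3 : (b : ℕ) * 2 ^ (k + 1) ≤ 2 ^ (k + 1) := by
      calc (b : ℕ) * 2 ^ (k + 1) ≤ 1 * 2 ^ (k + 1) := Nat.mul_le_mul_right _ h2
        _ = 2 ^ (k + 1) := one_mul _
    have h4 : 2 ^ (k + 2) = 2 ^ (k + 1) + 2 ^ (k + 1) := by ring
    omega
  rw [lift2, ZMod.coe_unitOfCoprime, ZMod.val_natCast, Nat.mod_eq_of_lt hlt]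

lemma projUnits_lift2 (k : ℕ) (g : (ZMod (2 ^ (k + 1)))ˣ) (b : Fin 2) :
    projUnits (k + 1) (lift2 k g b) = g := by
  ext
  simp only [projUnits, Units.coe_map, RingHom.toMonoidHom_eq_coe, MonoidHom.coe_coe]
  rw [lift2, ZMod.coe_unitOfCoprime, map_natCast]
  push_cast
  have h0 : ((2 : ZMod (2 ^ (k+1))) ^ (k+1)) = 0 := by
    have := ZMod.natCast_self (2 ^ (k+1)); push_cast at this; exact this
  rw [h0, mul_zero, add_zero, ZMod.natCast_val, ZMod.cast_id]

lemma lift2_bijective (k : ℕ) :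
    Function.Bijective (fun p : (ZMod (2 ^ (k + 1)))ˣ × Fin 2 => lift2 k p.1 p.2) := by
  rw [Fintype.bijective_iff_injective_and_card]
  constructor
  · rintro ⟨g1, b1⟩ ⟨g2, b2⟩ h
    simp only at h
    have hv := congrArg (fun u : (ZMod (2 ^ (k + 2)))ˣ => (u : ZMod (2 ^ (k + 2))).val) h
    simp only [lift2_val] at hv
    have h1 : (g1 : ZMod (2 ^ (k + 1))).val < 2 ^ (k + 1) := ZMod.val_lt _
    have h2 : (g2 : ZMod (2 ^ (k + 1))).val < 2 ^ (k + 1) := ZMod.val_lt _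
    have hb1 : (b1 : ℕ) ≤ 1 := Nat.lt_succ_iff.mp b1.2
    have hb2 : (b2 : ℕ) ≤ 1 := Nat.lt_succ_iff.mp b2.2
    have hp : 0 < 2 ^ (k + 1) := by positivity
    have e1 : (b1 : ℕ) * 2 ^ (k + 1) = 0 ∨ (b1 : ℕ) * 2 ^ (k + 1) = 2 ^ (k + 1) := by
      have : (b1 : ℕ) = 0 ∨ (b1 : ℕ) = 1 := by omega
      rcases this with h | h <;> simp [h]
    have e2 : (b2 : ℕ) * 2 ^ (k + 1) = 0 ∨ (b2 : ℕ) * 2 ^ (k + 1) = 2 ^ (k + 1) := by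
      have : (b2 : ℕ) = 0 ∨ (b2 : ℕ) = 1 := by omega
      rcases this with h | h <;> simp [h]
    have hgv : (g1 : ZMod (2 ^ (k + 1))).val = (g2 : ZMod (2 ^ (k + 1))).val := by omega
    have hbe : (b1 : ℕ) * 2 ^ (k + 1) = (b2 : ℕ) * 2 ^ (k + 1) := by omega
    have hbv : (b1 : ℕ) = (b2 : ℕ) := Nat.eq_of_mul_eq_mul_right hp hbe
    have : g1 = g2 := by
      ext
      exact ZMod.val_injective _ hgv
    rw [this, Fin.ext_iff.mpr hbv]
  · rw [Fintype.card_prod, ZMod.card_units_eq_totient, ZMod.card_units_eq_totient,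
      Nat.totient_prime_pow Nat.prime_two (Nat.succ_pos k),
      Nat.totient_prime_pow Nat.prime_two (Nat.succ_pos (k + 1))]
    simp [Fintype.card_fin]
    ring

lemma sum_units_split (k : ℕ) {M : Type*} [AddCommMonoid M]
    (f : (ZMod (2 ^ (k + 2)))ˣ → M) :
    ∑ u : (ZMod (2 ^ (k + 2)))ˣ, f u
      = ∑ g : (ZMod (2 ^ (k + 1)))ˣ, (f (lift2 k g 0) + f (lift2 k g 1)) := by
  rw [← Fintype.sum_bijective _ (lift2_bijective k) _ _ (fun _ => rfl)]
  rw [Fintype.sum_prod_type]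
  exact Finset.sum_congr rfl fun g _ => by rw [Fin.sum_univ_two]

lemma xiElt_apply (S : ℚ → ℝ) (n : ℕ) (u : (ZMod (2 ^ n))ˣ) :
    (xiElt S n).coeff u = S (((u : ZMod (2 ^ n)).val : ℚ) / (2 ^ n : ℚ)) := by
  rw [xiElt, MonoidAlgebra.coeff_sum, Finsupp.finset_sum_apply]
  simp [MonoidAlgebra.coeff_single, Finsupp.single_apply]

lemma S_add_nat (S : ℚ → ℝ) (hSper : ∀ β : ℚ, S (β + 1) = S β) :
    ∀ (m : ℕ) (β : ℚ), S (β + m) = S β := by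
  intro m
  induction m with
  | zero => simp
  | succ m ih =>
    intro β
    have : β + (m + 1 : ℕ) = (β + m) + 1 := by push_cast; ring
    rw [this, hSper, ih]

lemma val_projUnits (n : ℕ) (g : (ZMod (2 ^ (n + 1)))ˣ) :
    ((projUnits n g : ZMod (2 ^ n))).val = (g : ZMod (2 ^ (n + 1))).val % 2 ^ n := by
  have : (projUnits n g : ZMod (2 ^ n))
      = ((g : ZMod (2 ^ (n + 1))).val : ZMod (2 ^ n)) := by
    simp only [projUnits, Units.coe_map, RingHom.toMonoidHom_eq_coe, MonoidHom.coe_coe]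
    have hg : (((g : ZMod (2 ^ (n + 1))).val : ℕ) : ZMod (2 ^ (n + 1)))
        = (g : ZMod (2 ^ (n + 1))) := by
      rw [ZMod.natCast_val, ZMod.cast_id]
    conv_lhs => rw [← hg]
    rw [map_natCast]
  rw [this, ZMod.val_natCast]

lemma key_identity
    (N : ℕ) (hN : Odd N) (a : ℕ → ℤ) (S : ℚ → ℝ)
    (hS0 : S 0 = 0)
    (hHecke : ∀ ℓ : ℕ, ℓ.Prime → ¬(ℓ ∣ N) → ∀ β : ℚ, Nat.Coprime β.den N →
      ∑ x ∈ Finset.range ℓ, S ((β + (x : ℚ)) / (ℓ : ℚ)) =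
        (a ℓ : ℝ) * S β - S ((ℓ : ℚ) * β) + ∑ x ∈ Finset.range ℓ, S ((x : ℚ) / (ℓ : ℚ)))
    (ha2 : a 2 = 0) (k : ℕ) (v : ℕ) :
    S ((v : ℚ) / 2 ^ (k + 3)) + S (((v : ℚ) + 2 ^ (k + 2)) / 2 ^ (k + 3))
      = -S ((v : ℚ) / 2 ^ (k + 1)) + S (1 / 2) := by
  have h2N : ¬ (2 ∣ N) := by
    rcases hN with ⟨m, rfl⟩; omega
  set β : ℚ := (v : ℚ) / 2 ^ (k + 2) with hβ
  have hden : Nat.Coprime β.den N := by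
    have hdvd : (β.den : ℤ) ∣ (2 : ℤ) ^ (k + 2) := by
      have hb : β = Rat.divInt (v : ℤ) ((2 : ℤ) ^ (k + 2)) := by
        rw [Rat.divInt_eq_div]; push_cast; rfl
      rw [hb]
      exact Rat.den_dvd _ _
    have hdvdn : β.den ∣ 2 ^ (k + 2) := by exact_mod_cast hdvd
    have hc2 : Nat.Coprime 2 N := (Nat.Prime.coprime_iff_not_dvd Nat.prime_two).mpr h2N
    exact Nat.Coprime.coprime_dvd_left hdvdn (Nat.Coprime.pow_left _ hc2)
  have h := hHecke 2 Nat.prime_two h2N β hden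
  rw [Finset.sum_range_succ, Finset.sum_range_succ, Finset.sum_range_zero,
    Finset.sum_range_succ, Finset.sum_range_succ, Finset.sum_range_zero] at h
  have e1 : (β + ((0 : ℕ) : ℚ)) / ((2 : ℕ) : ℚ) = (v : ℚ) / 2 ^ (k + 3) := by
    rw [hβ]; push_cast
    rw [add_zero, div_div, show (2:ℚ)^(k+3) = 2^(k+2)*2 from by ring]
  have e2 : (β + ((1 : ℕ) : ℚ)) / ((2 : ℕ) : ℚ)
      = ((v : ℚ) + 2 ^ (k + 2)) / 2 ^ (k + 3) := by
    have h : (0:ℚ) < 2^(k+1) := by positivity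
    rw [hβ]; push_cast
    rw [show (2:ℚ)^(k+3) = 2^(k+1)*4 from by ring, show (2:ℚ)^(k+2) = 2^(k+1)*2 from by ring]
    rw [div_eq_div_iff (by norm_num) (by positivity)]
    field_simp
    ring
  have e3 : ((2 : ℕ) : ℚ) * β = (v : ℚ) / 2 ^ (k + 1) := by
    have h : (0:ℚ) < 2^(k+1) := by positivity
    rw [hβ]; push_cast
    rw [show (2:ℚ)^(k+2) = 2^(k+1)*2 from by ring]
    field_simp
  have e4 : (((0 : ℕ) : ℚ)) / ((2 : ℕ) : ℚ) = 0 := by norm_num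
  have e5 : (((1 : ℕ) : ℚ)) / ((2 : ℕ) : ℚ) = 1 / 2 := by norm_num
  rw [e1, e2, e3, e4, e5, ha2, hS0] at h
  push_cast at h
  linarith

lemma mapDomain_finset_sum' {ι M N : Type*} (f : M → N) (s : Finset ι)
    (g : ι → MonoidAlgebra ℝ M) :
    MonoidAlgebra.mapDomain f (∑ i ∈ s, g i) = ∑ i ∈ s, MonoidAlgebra.mapDomain f (g i) := by
  classical
  induction s using Finset.induction_on with
  | empty => simp
  | insert a s ha ih =>
    rw [Finset.sum_insert ha, Finset.sum_insert ha, MonoidAlgebra.mapDomain_add, ih]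

/-! ### Specializations with shifted exponents -/

lemma sum_units_split' (k : ℕ) {M : Type*} [AddCommMonoid M]
    (f : (ZMod (2 ^ (k + 3)))ˣ → M) :
    ∑ u : (ZMod (2 ^ (k + 3)))ˣ, f u
      = ∑ g : (ZMod (2 ^ (k + 2)))ˣ, (f (lift2 (k + 1) g 0) + f (lift2 (k + 1) g 1)) :=
  sum_units_split (k + 1) f

lemma lift2_val' (k : ℕ) (g : (ZMod (2 ^ (k + 2)))ˣ) (b : Fin 2) :
    ((lift2 (k + 1) g b : ZMod (2 ^ (k + 3)))).val
      = (g : ZMod (2 ^ (k + 2))).val + (b : ℕ) * 2 ^ (k + 2) :=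
  lift2_val (k + 1) g b

lemma projUnits_lift2' (k : ℕ) (g : (ZMod (2 ^ (k + 2)))ˣ) (b : Fin 2) :
    projUnits (k + 2) (lift2 (k + 1) g b) = g :=
  projUnits_lift2 (k + 1) g b

/-- Distribution relation for modular elements: if `a(2) = 0` then for all `n ≥ 3` (here
`n = k + 3`), `π_n(ξ_{2^n}) = −ν_{n−2}(ξ_{2^{n−2}}) + S(1/2)·τ_{2^{n−1}}`. -/
theorem modularElement_distribution_relation
    (N : ℕ) (hN : Odd N)
    (a : ℕ → ℤ) (ha1 : a 1 = 1)
    (hamul : ∀ m k : ℕ, Nat.Coprime m k → a (m * k) = a m * a k)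
    (S : ℚ → ℝ)
    (hS0 : S 0 = 0) (hSneg : ∀ β : ℚ, S (-β) = S β) (hSper : ∀ β : ℚ, S (β + 1) = S β)
    (hHecke : ∀ ℓ : ℕ, ℓ.Prime → ¬(ℓ ∣ N) → ∀ β : ℚ, Nat.Coprime β.den N →
      ∑ x ∈ Finset.range ℓ, S ((β + (x : ℚ)) / (ℓ : ℚ)) =
        (a ℓ : ℝ) * S β - S ((ℓ : ℚ) * β) + ∑ x ∈ Finset.range ℓ, S ((x : ℚ) / (ℓ : ℚ)))
    (ha2 : a 2 = 0) :
    ∀ k : ℕ,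
      piMap (k + 2) (xiElt S (k + 3)) =
        -(nuMap (k + 1) (xiElt S (k + 1))) + S (1 / 2) • tauElt (k + 2) := by
  intro k
  have hL : piMap (k + 2) (xiElt S (k + 3))
      = ∑ g : (ZMod (2 ^ (k + 2)))ˣ, MonoidAlgebra.single g
          (S ((((g : ZMod (2 ^ (k + 2))).val : ℚ)) / 2 ^ (k + 3))
            + S ((((g : ZMod (2 ^ (k + 2))).val : ℚ) + 2 ^ (k + 2)) / 2 ^ (k + 3))) := by
    rw [piMap, xiElt, mapDomain_finset_sum']
    simp only [MonoidAlgebra.mapDomain_single]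
    rw [sum_units_split' k (fun u => MonoidAlgebra.single (projUnits (k + 2) u)
      (S (((u : ZMod (2 ^ (k + 3))).val : ℚ) / (2 ^ (k + 3) : ℚ))))]
    refine Finset.sum_congr rfl fun g _ => ?_
    simp only [projUnits_lift2', lift2_val']
    rw [← MonoidAlgebra.single_add]
    congr 1
    push_cast
    norm_num
  have hR : -(nuMap (k + 1) (xiElt S (k + 1))) + S (1 / 2) • tauElt (k + 2)
      = ∑ g : (ZMod (2 ^ (k + 2)))ˣ, MonoidAlgebra.single g
          (-(S ((((projUnits (k + 1) g : ZMod (2 ^ (k + 1))).val : ℚ)) / 2 ^ (k + 1)))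
            + S (1 / 2)) := by
    rw [nuMap, tauElt, Finset.smul_sum, ← Finset.sum_neg_distrib, ← Finset.sum_add_distrib]
    refine Finset.sum_congr rfl fun g _ => ?_
    rw [xiElt_apply, MonoidAlgebra.smul_single, smul_eq_mul, mul_one, ← MonoidAlgebra.single_neg,
      ← MonoidAlgebra.single_add]
  rw [hL, hR]
  refine Finset.sum_congr rfl fun g _ => ?_
  congr 1
  have hw : ((projUnits (k + 1) g : ZMod (2 ^ (k + 1)))).val
      = (g : ZMod (2 ^ (k + 2))).val % 2 ^ (k + 1) := val_projUnits (k + 1) g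
  set v : ℕ := (g : ZMod (2 ^ (k + 2))).val with hv
  have hq : (v : ℚ) / 2 ^ (k + 1)
      = ((v % 2 ^ (k + 1) : ℕ) : ℚ) / 2 ^ (k + 1) + ((v / 2 ^ (k + 1) : ℕ) : ℚ) := by
    have hsplit : (v : ℚ) = ((v % 2 ^ (k + 1) : ℕ) : ℚ)
        + 2 ^ (k + 1) * ((v / 2 ^ (k + 1) : ℕ) : ℚ) := by
      exact_mod_cast (Nat.mod_add_div v (2 ^ (k + 1))).symm
    rw [hsplit, add_div, mul_comm, mul_div_assoc, div_self (by positivity), mul_one]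
  have hS : S (((v % 2 ^ (k + 1) : ℕ) : ℚ) / 2 ^ (k + 1)) = S ((v : ℚ) / 2 ^ (k + 1)) := by
    rw [hq, S_add_nat S hSper]
  rw [hw, hS]
  exact key_identity N hN a S hS0 hHecke ha2 k v
end

section
/- (1) Assume a(2) = 0. Then for every integer n ≥ 2, π_n(ξ_{ℚ_n}) = −ν_{n−2}(ξ_{ℚ_{n−2}}) + 2·S(1/2)·τ_{ℚ_{n−1}} in ℚ[G_{n−1}]. (2) If moreover S takes all its values in (1/2)ℤ, then every coefficient of ξ_{ℚ_n} is an integer, i.e. ξ_{ℚ_n} lies in the image of ℤ[G_n] in ℚ[G_n] (hence ξ_{ℚ_n} ∈ ℤ₂[G_n]). -/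
open Finset

/-- `G_n = (ℤ/2^{n+2}ℤ)ˣ/{±1}`, the Galois group of the `n`-th layer of the cyclotomic
`ℤ₂`-extension of `ℚ`. -/
abbrev Gq (n : ℕ) : Type :=
  (ZMod (2 ^ (n + 2)))ˣ ⧸ Subgroup.zpowers (-1 : (ZMod (2 ^ (n + 2)))ˣ)

noncomputable instance (n : ℕ) : Fintype (Gq n) := Fintype.ofFinite _

/-- The natural surjection `G_{n+1} → G_n`. -/
def projG (n : ℕ) : Gq (n + 1) →* Gq n :=
  QuotientGroup.map _ _ (projUnits (n + 2)) (by
    rw [Subgroup.zpowers_le]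
    refine Subgroup.mem_comap.mpr ?_
    have : projUnits (n + 2) (-1) = -1 := by
      ext
      simp [projUnits]
    rw [this]
    exact Subgroup.mem_zpowers _)

/-- The Mazur–Tate element `ξ_{ℚ_n} ∈ ℚ[G_n]`, the image of
`ξ_{2^{n+2}} = ∑_{k ∈ (ℤ/2^{n+2}ℤ)ˣ} S(k/2^{n+2})·σ_k` under the quotient map. -/
noncomputable def xiQ (S : ℚ → ℝ) (n : ℕ) : MonoidAlgebra ℝ (Gq n) :=
  MonoidAlgebra.ofCoeff (Finsupp.mapDomain (QuotientGroup.mk' (Subgroup.zpowers (-1 : (ZMod (2 ^ (n + 2)))ˣ)))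
    (∑ k : (ZMod (2 ^ (n + 2)))ˣ,
      Finsupp.single k (S (((k : ZMod (2 ^ (n + 2))).val : ℚ) / (2 ^ (n + 2) : ℚ)))))

/-- The trace element `τ_{ℚ_n} = ∑_{σ ∈ G_n} σ`. -/
noncomputable def tauQ (n : ℕ) : MonoidAlgebra ℝ (Gq n) :=
  ∑ σ : Gq n, MonoidAlgebra.single σ (1 : ℝ)

/-- The map `ν_n : ℚ[G_n] → ℚ[G_{n+1}]` sending a group element to the sum of its two
preimages under the natural surjection. -/
noncomputable def nuQ (n : ℕ) (f : MonoidAlgebra ℝ (Gq n)) : MonoidAlgebra ℝ (Gq (n + 1)) :=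
  ∑ g : Gq (n + 1), MonoidAlgebra.single g (f.coeff (projG n g))

section AuxGeneral

variable {S : ℚ → ℝ}

lemma S_per_nat (hSper : ∀ β : ℚ, S (β + 1) = S β) (β : ℚ) :
    ∀ c : ℕ, S (β + (c : ℚ)) = S β := by
  intro c
  induction c with
  | zero => simp
  | succ c ih =>
      have h : β + ((c + 1 : ℕ) : ℚ) = (β + (c : ℚ)) + 1 := by push_cast; ring
      rw [h, hSper, ih]

lemma S_mod2 (hSper : ∀ β : ℚ, S (β + 1) = S β) (e k : ℕ) :
    S (((k % 2 ^ e : ℕ) : ℚ) / (2 ^ e : ℚ)) = S ((k : ℚ) / (2 ^ e : ℚ)) := by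
  have hM : ((2 : ℚ) ^ e) ≠ 0 := by positivity
  have hNat : ((k % 2 ^ e : ℕ) : ℚ) + (2 ^ e : ℚ) * ((k / 2 ^ e : ℕ) : ℚ) = (k : ℚ) := by
    exact_mod_cast congrArg (fun x : ℕ => (x : ℚ)) (Nat.mod_add_div k (2 ^ e))
  have harg : (k : ℚ) / (2 ^ e : ℚ) = ((k % 2 ^ e : ℕ) : ℚ) / (2 ^ e : ℚ) + ((k / 2 ^ e : ℕ) : ℚ) := by
    field_simp
    linarith
  rw [harg, S_per_nat hSper]

lemma S_compl2 (hSneg : ∀ β : ℚ, S (-β) = S β) (hSper : ∀ β : ℚ, S (β + 1) = S β)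
    (e v : ℕ) (hv : v ≤ 2 ^ e) :
    S (((2 ^ e - v : ℕ) : ℚ) / (2 ^ e : ℚ)) = S ((v : ℚ) / (2 ^ e : ℚ)) := by
  have hM : ((2 : ℚ) ^ e) ≠ 0 := by positivity
  have h : ((2 ^ e - v : ℕ) : ℚ) / (2 ^ e : ℚ) = -((v : ℚ) / (2 ^ e : ℚ)) + 1 := by
    rw [Nat.cast_sub hv]
    push_cast
    field_simp
    ring
  rw [h, hSper, hSneg]

lemma sum_ite_or2 {α : Type*} [Fintype α] [DecidableEq α] (a b : α) (f : α → ℝ)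
    (hab : a ≠ b) :
    (∑ u : α, if u = a ∨ u = b then f u else 0) = f a + f b := by
  have h : ∀ u : α, (if u = a ∨ u = b then f u else 0)
      = (if u = a then f u else 0) + (if u = b then f u else 0) := by
    intro u
    by_cases h1 : u = a <;> by_cases h2 : u = b <;> simp_all
  simp_rw [h]
  rw [Finset.sum_add_distrib]
  simp

lemma sum_ite_or4 {α : Type*} [Fintype α] [DecidableEq α] (a b c d : α) (f : α → ℝ)
    (hab : a ≠ b) (hac : a ≠ c) (had : a ≠ d) (hbc : b ≠ c) (hbd : b ≠ d) (hcd : c ≠ d) :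
    (∑ u : α, if u = a ∨ u = b ∨ u = c ∨ u = d then f u else 0) = f a + f b + f c + f d := by
  have h : ∀ u : α, (if u = a ∨ u = b ∨ u = c ∨ u = d then f u else 0)
      = (if u = a then f u else 0) + (if u = b then f u else 0)
        + (if u = c then f u else 0) + (if u = d then f u else 0) := by
    intro u
    by_cases h1 : u = a <;> by_cases h2 : u = b <;> by_cases h3 : u = c <;>
      by_cases h4 : u = d <;> simp_all
  simp_rw [h]
  rw [Finset.sum_add_distrib, Finset.sum_add_distrib, Finset.sum_add_distrib]
  simp

lemma mapDomain_sum_single_apply {α β : Type*} [Fintype α] [DecidableEq β]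
    (f : α → β) (c : α → ℝ) (g : β) :
    (Finsupp.mapDomain f (∑ u : α, Finsupp.single u (c u))) g
      = ∑ u : α, if f u = g then c u else 0 := by
  classical
  rw [Finsupp.mapDomain_finset_sum]
  simp_rw [Finsupp.mapDomain_single]
  rw [Finsupp.finset_sum_apply]
  simp_rw [Finsupp.single_apply]

lemma odd_of_coprime_two_pow {t e : ℕ} (he : 0 < e) (h : Nat.Coprime t (2 ^ e)) :
    t % 2 = 1 := by
  have h2 : Nat.Coprime t 2 := (Nat.coprime_pow_right_iff he t 2).mp h
  have h3 : ¬ (2 ∣ t) := (Nat.prime_two.coprime_iff_not_dvd).mp h2.symm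
  omega

lemma coprime_two_pow_of_odd {s : ℕ} (h : s % 2 = 1) (e : ℕ) : Nat.Coprime s (2 ^ e) := by
  have h3 : ¬ (2 ∣ s) := by omega
  exact Nat.Coprime.pow_right e ((Nat.prime_two.coprime_iff_not_dvd).mpr h3).symm

lemma natCast_val_eq {q : ℕ} [NeZero q] (x : ZMod q) : ((x.val : ℕ) : ZMod q) = x := by
  rw [ZMod.natCast_val, ZMod.cast_id]

end AuxGeneral

section GroupAux

lemma neg_one_zpow_units {M : Type*} [CommRing M] (z : ℤ) :
    ((-1 : Mˣ) ^ z = 1) ∨ ((-1 : Mˣ) ^ z = -1) := by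
  have hsq : ((-1 : Mˣ)) ^ (2 : ℤ) = 1 := by
    ext
    push_cast [zpow_two]
    ring
  rcases Int.even_or_odd z with ⟨l, hl⟩ | ⟨l, hl⟩
  · left
    have h : z = 2 * l := by omega
    rw [h, zpow_mul, hsq, one_zpow]
  · right
    rw [hl, zpow_add, zpow_mul, hsq, one_zpow, one_mul, zpow_one]

lemma two_lt_two_pow (n : ℕ) : 2 < 2 ^ (n + 2) := by
  have h : (2 : ℕ) ^ 2 ≤ 2 ^ (n + 2) := Nat.pow_le_pow_right (by norm_num) (by omega)
  omega

instance fact_one_lt (n : ℕ) : Fact (1 < 2 ^ (n + 2)) := ⟨by have := two_lt_two_pow n; omega⟩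

lemma zmodUnits_ne_neg_self (n : ℕ) (u : (ZMod (2 ^ (n + 2)))ˣ) : u ≠ -u := by
  intro h
  have hval : ((u : ZMod (2 ^ (n + 2)))).val
      = ((-u : (ZMod (2 ^ (n + 2)))ˣ) : ZMod (2 ^ (n + 2))).val :=
    congrArg (fun x : (ZMod (2 ^ (n + 2)))ˣ => ((x : ZMod (2 ^ (n + 2)))).val) h
  have hne : (u : ZMod (2 ^ (n + 2))) ≠ 0 := Units.ne_zero u
  rw [Units.val_neg, ZMod.neg_val, if_neg hne] at hval
  have hodd : (u : ZMod (2 ^ (n + 2))).val % 2 = 1 :=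
    odd_of_coprime_two_pow (by omega) (ZMod.val_coe_unit_coprime u)
  have hlt : (u : ZMod (2 ^ (n + 2))).val < 2 ^ (n + 2) := ZMod.val_lt _
  have h4 : 2 ^ (n + 2) = 2 * (2 * 2 ^ n) := by ring
  omega

lemma mk_eq_mk_iff (n : ℕ) (u w : (ZMod (2 ^ (n + 2)))ˣ) :
    (QuotientGroup.mk u : Gq n) = QuotientGroup.mk w ↔ u = w ∨ u = -w := by
  rw [QuotientGroup.eq, Subgroup.mem_zpowers_iff]
  constructor
  · rintro ⟨z, hz⟩
    rcases neg_one_zpow_units (M := ZMod (2 ^ (n + 2))) z with h1 | h1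
    · left
      rw [h1] at hz
      exact (inv_mul_eq_one.mp hz.symm)
    · right
      rw [h1] at hz
      have h : w = u * (-1) := by rw [hz]; group
      rw [h]
      simp
  · rintro (rfl | rfl)
    · exact ⟨0, by simp⟩
    · refine ⟨1, ?_⟩
      rw [zpow_one, inv_neg, neg_mul, inv_mul_cancel]

lemma xiQ_apply_mk (S : ℚ → ℝ) (hSneg : ∀ β : ℚ, S (-β) = S β)
    (hSper : ∀ β : ℚ, S (β + 1) = S β) (n : ℕ) (w : (ZMod (2 ^ (n + 2)))ˣ) :
    (xiQ S n).coeff (QuotientGroup.mk w)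
      = 2 * S (((w : ZMod (2 ^ (n + 2))).val : ℚ) / (2 ^ (n + 2) : ℚ)) := by
  classical
  rw [xiQ, MonoidAlgebra.coeff_ofCoeff, mapDomain_sum_single_apply]
  simp_rw [QuotientGroup.mk'_apply, mk_eq_mk_iff]
  rw [sum_ite_or2 _ _ _ (zmodUnits_ne_neg_self n w)]
  have hne : (w : ZMod (2 ^ (n + 2))) ≠ 0 := Units.ne_zero w
  have hval : ((-w : (ZMod (2 ^ (n + 2)))ˣ) : ZMod (2 ^ (n + 2))).val
      = 2 ^ (n + 2) - (w : ZMod (2 ^ (n + 2))).val := by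
    rw [Units.val_neg, ZMod.neg_val, if_neg hne]
  rw [hval]
  rw [S_compl2 hSneg hSper (n + 2) _ (ZMod.val_lt _).le]
  ring

end GroupAux

/-- (1) If `a(2) = 0` then for all `n ≥ 2` (here `n = k + 2`),
`π_n(ξ_{ℚ_n}) = −ν_{n−2}(ξ_{ℚ_{n−2}}) + 2·S(1/2)·τ_{ℚ_{n−1}}`.
(2) If `S` takes values in `(1/2)ℤ`, then every coefficient of `ξ_{ℚ_n}` is an integer. -/
theorem mazurTate_distribution_and_integrality
    (N : ℕ) (hN : Odd N)
    (a : ℕ → ℤ) (ha1 : a 1 = 1)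
    (hamul : ∀ m k : ℕ, Nat.Coprime m k → a (m * k) = a m * a k)
    (S : ℚ → ℝ)
    (hS0 : S 0 = 0) (hSneg : ∀ β : ℚ, S (-β) = S β) (hSper : ∀ β : ℚ, S (β + 1) = S β)
    (hHecke : ∀ ℓ : ℕ, ℓ.Prime → ¬(ℓ ∣ N) → ∀ β : ℚ, Nat.Coprime β.den N →
      ∑ x ∈ Finset.range ℓ, S ((β + (x : ℚ)) / (ℓ : ℚ)) =
        (a ℓ : ℝ) * S β - S ((ℓ : ℚ) * β) + ∑ x ∈ Finset.range ℓ, S ((x : ℚ) / (ℓ : ℚ))) :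
    ((a 2 = 0) → ∀ k : ℕ,
        MonoidAlgebra.mapDomain (projG (k + 1)) (xiQ S (k + 2)) =
          -(nuQ k (xiQ S k)) + (2 * S (1 / 2)) • tauQ (k + 1)) ∧
      ((∀ β : ℚ, ∃ c : ℤ, S β = (c : ℝ) / 2) →
        ∀ n : ℕ, ∀ g : Gq n, ∃ c : ℤ, (xiQ S n).coeff g = (c : ℝ)) := by
  classical
  have h2N : ¬ (2 ∣ N) := by
    rcases hN with ⟨c, rfl⟩; omega
  have hcop2N : Nat.Coprime 2 N := (Nat.prime_two.coprime_iff_not_dvd).mpr h2N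
  constructor
  · intro ha2 n
    -- Hecke consequence at ℓ = 2
    have hecke : ∀ t d : ℕ,
        S ((t : ℚ) / (2 ^ (d + 2) : ℚ)) + S (((t + 2 ^ (d + 1) : ℕ) : ℚ) / (2 ^ (d + 2) : ℚ))
          = S (1 / 2) - S ((t : ℚ) / (2 ^ d : ℚ)) := by
      intro t d
      have hden : Nat.Coprime ((t : ℚ) / (2 ^ (d + 1) : ℚ)).den N := by
        have h := Rat.den_dvd (t : ℤ) ((2 : ℤ) ^ (d + 1))
        rw [Rat.divInt_eq_div] at h
        have h2 : (((t : ℤ) : ℚ) / (((2 : ℤ) ^ (d + 1) : ℤ) : ℚ)) = (t : ℚ) / (2 ^ (d + 1) : ℚ) := by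
          push_cast; ring
        rw [h2] at h
        have h3 : ((t : ℚ) / (2 ^ (d + 1) : ℚ)).den ∣ 2 ^ (d + 1) := by exact_mod_cast h
        exact Nat.Coprime.coprime_dvd_left h3 (Nat.Coprime.pow_left _ hcop2N)
      have h2 := hHecke 2 Nat.prime_two h2N ((t : ℚ) / (2 ^ (d + 1) : ℚ)) hden
      simp only [Finset.sum_range_succ, Finset.sum_range_one] at h2
      rw [ha2] at h2
      push_cast at h2
      rw [add_zero] at h2
      norm_num at h2
      rw [hS0] at h2
      have e1 : (t : ℚ) / (2 ^ (d + 2) : ℚ) = ((t : ℚ) / (2 ^ (d + 1) : ℚ)) / 2 := by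
        rw [pow_succ]
        ring
      have e2 : ((t : ℚ) / (2 ^ (d + 1) : ℚ) + 1) / 2
          = ((t + 2 ^ (d + 1) : ℕ) : ℚ) / (2 ^ (d + 2) : ℚ) := by
        have hpow : ((2 : ℚ) ^ (d + 1)) ≠ 0 := by positivity
        rw [div_add_one hpow, div_div, ← pow_succ]
        push_cast
        ring
      have e3 : (t : ℚ) / (2 ^ d : ℚ) = 2 * ((t : ℚ) / (2 ^ (d + 1) : ℚ)) := by
        rw [pow_succ]
        ring
      rw [e1, ← e2, e3]
      linarith [h2]
    refine MonoidAlgebra.coeff_injective (Finsupp.ext fun g => ?_)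
    induction g using QuotientGroup.induction_on with
    | H j =>
    rw [MonoidAlgebra.coeff_add, MonoidAlgebra.coeff_neg, MonoidAlgebra.coeff_smul]
    rw [Finsupp.add_apply, Finsupp.neg_apply, Finsupp.smul_apply, smul_eq_mul]
    have htau : (tauQ (n + 1)).coeff (QuotientGroup.mk j) = 1 := by
      rw [tauQ, MonoidAlgebra.coeff_sum, Finsupp.finset_sum_apply]
      simp [MonoidAlgebra.coeff_single, Finsupp.single_apply]
    have hnu : (nuQ n (xiQ S n)).coeff (QuotientGroup.mk j)
        = (xiQ S n).coeff (projG n (QuotientGroup.mk j)) := by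
      rw [nuQ, MonoidAlgebra.coeff_sum, Finsupp.finset_sum_apply]
      simp [MonoidAlgebra.coeff_single, Finsupp.single_apply]
    have hpj : projG n (QuotientGroup.mk j) = QuotientGroup.mk (projUnits (n + 2) j) := by
      rw [projG]
      rw [QuotientGroup.map_mk]
    rw [htau, hnu, hpj, xiQ_apply_mk S hSneg hSper n (projUnits (n + 2) j)]
    -- numeric setup
    set t := (j : ZMod (2 ^ (n + 1 + 2))).val with ht
    have ht_lt : t < 2 ^ (n + 1 + 2) := ZMod.val_lt _
    have hodd_t : t % 2 = 1 :=
      odd_of_coprime_two_pow (by omega) (ZMod.val_coe_unit_coprime j)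
    obtain ⟨M, hM3, hM4, hM2, hMpos⟩ :
        ∃ M : ℕ, 2 ^ (n + 1 + 2) = 8 * M ∧ 2 ^ (n + 2 + 2) = 16 * M
          ∧ 2 ^ (n + 2) = 4 * M ∧ 0 < M :=
      ⟨2 ^ n, by ring, by ring, by ring, pow_pos (by norm_num) n⟩
    have ht_lt' : t < 8 * M := hM3 ▸ ht_lt
    -- value of the small projection
    have hprojsmall : (projUnits (n + 2) j : ZMod (2 ^ (n + 2)))
        = ((t : ℕ) : ZMod (2 ^ (n + 2))) := by
      rw [projUnits, Units.coe_map]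
      show (ZMod.castHom (pow_dvd_pow 2 (Nat.le_succ (n + 2))) (ZMod (2 ^ (n + 2))))
          (j : ZMod (2 ^ (n + 1 + 2))) = _
      conv_lhs => rw [← natCast_val_eq ((j : ZMod (2 ^ (n + 1 + 2))))]
      rw [map_natCast]
    have hvalsmall : (projUnits (n + 2) j : ZMod (2 ^ (n + 2))).val = t % 2 ^ (n + 2) := by
      rw [hprojsmall, ZMod.val_natCast]
    rw [hvalsmall, S_mod2 hSper (n + 2) t]
    -- LHS
    rw [MonoidAlgebra.mapDomain, MonoidAlgebra.coeff_ofCoeff, xiQ, MonoidAlgebra.coeff_ofCoeff,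
      ← Finsupp.mapDomain_comp, mapDomain_sum_single_apply]
    simp only [Function.comp_apply, QuotientGroup.mk'_apply, projG, QuotientGroup.map_mk]
    simp_rw [mk_eq_mk_iff (n + 1)]
    -- the coe of the big projection
    have hproj : ∀ u : (ZMod (2 ^ (n + 2 + 2)))ˣ,
        (projUnits (n + 1 + 2) u : ZMod (2 ^ (n + 1 + 2)))
          = (((u : ZMod (2 ^ (n + 2 + 2))).val : ℕ) : ZMod (2 ^ (n + 1 + 2))) := by
      intro u
      rw [projUnits, Units.coe_map]
      show (ZMod.castHom (pow_dvd_pow 2 (Nat.le_succ (n + 1 + 2))) (ZMod (2 ^ (n + 1 + 2))))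
          (u : ZMod (2 ^ (n + 2 + 2))) = _
      conv_lhs => rw [← natCast_val_eq ((u : ZMod (2 ^ (n + 2 + 2))))]
      rw [map_natCast]
    have hvalproj : ∀ u : (ZMod (2 ^ (n + 2 + 2)))ˣ,
        projUnits (n + 1 + 2) u = j →
          (u : ZMod (2 ^ (n + 2 + 2))).val % 2 ^ (n + 1 + 2) = t := by
      intro u huv
      have h1 : (((u : ZMod (2 ^ (n + 2 + 2))).val : ℕ) : ZMod (2 ^ (n + 1 + 2)))
          = ((t : ℕ) : ZMod (2 ^ (n + 1 + 2))) := by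
        rw [← hproj u, huv, ht, natCast_val_eq]
      have h2 := (ZMod.natCast_eq_natCast_iff' _ _ _).mp h1
      rwa [Nat.mod_eq_of_lt ht_lt] at h2
    -- the four preimages
    have hcop_a : Nat.Coprime t (2 ^ (n + 2 + 2)) := coprime_two_pow_of_odd hodd_t _
    have hcop_b : Nat.Coprime (t + 2 ^ (n + 1 + 2)) (2 ^ (n + 2 + 2)) := by
      apply coprime_two_pow_of_odd
      rw [hM3]
      omega
    set a' := ZMod.unitOfCoprime t hcop_a with ha'
    set b' := ZMod.unitOfCoprime (t + 2 ^ (n + 1 + 2)) hcop_b with hb'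
    have hvala : ((a' : ZMod (2 ^ (n + 2 + 2)))).val = t := by
      rw [ha', ZMod.coe_unitOfCoprime, ZMod.val_natCast, Nat.mod_eq_of_lt (by rw [hM4]; omega)]
    have hvalb : ((b' : ZMod (2 ^ (n + 2 + 2)))).val = t + 2 ^ (n + 1 + 2) := by
      rw [hb', ZMod.coe_unitOfCoprime, ZMod.val_natCast,
        Nat.mod_eq_of_lt (by rw [hM3, hM4]; omega)]
    have hne_a0 : (a' : ZMod (2 ^ (n + 2 + 2))) ≠ 0 := Units.ne_zero a'
    have hne_b0 : (b' : ZMod (2 ^ (n + 2 + 2))) ≠ 0 := Units.ne_zero b'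
    have hvalna : ((-a' : (ZMod (2 ^ (n + 2 + 2)))ˣ) : ZMod (2 ^ (n + 2 + 2))).val
        = 2 ^ (n + 2 + 2) - t := by
      rw [Units.val_neg, ZMod.neg_val, if_neg hne_a0, hvala]
    have hvalnb : ((-b' : (ZMod (2 ^ (n + 2 + 2)))ˣ) : ZMod (2 ^ (n + 2 + 2))).val
        = 2 ^ (n + 2 + 2) - (t + 2 ^ (n + 1 + 2)) := by
      rw [Units.val_neg, ZMod.neg_val, if_neg hne_b0, hvalb]
    have hval_inj : ∀ u v : (ZMod (2 ^ (n + 2 + 2)))ˣ,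
        ((u : ZMod (2 ^ (n + 2 + 2)))).val = ((v : ZMod (2 ^ (n + 2 + 2)))).val → u = v := by
      intro u v h
      exact Units.ext (by
        rw [← natCast_val_eq ((u : ZMod (2 ^ (n + 2 + 2)))), h, natCast_val_eq])
    have hval_ne : ∀ u v : (ZMod (2 ^ (n + 2 + 2)))ˣ,
        ((u : ZMod (2 ^ (n + 2 + 2)))).val ≠ ((v : ZMod (2 ^ (n + 2 + 2)))).val → u ≠ v := by
      intro u v h huv
      exact h (by rw [huv])
    have hfib : ∀ u : (ZMod (2 ^ (n + 2 + 2)))ˣ,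
        projUnits (n + 1 + 2) u = j → u = a' ∨ u = b' := by
      intro u hu
      have hmod := hvalproj u hu
      have hult : (u : ZMod (2 ^ (n + 2 + 2))).val < 2 ^ (n + 2 + 2) := ZMod.val_lt _
      have hmod' : (u : ZMod (2 ^ (n + 2 + 2))).val % (8 * M) = t := hM3 ▸ hmod
      have hult' : (u : ZMod (2 ^ (n + 2 + 2))).val < 16 * M := hM4 ▸ hult
      have hdm := Nat.div_add_mod ((u : ZMod (2 ^ (n + 2 + 2))).val) (8 * M)
      have hqlt : (u : ZMod (2 ^ (n + 2 + 2))).val / (8 * M) < 2 :=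
        Nat.div_lt_of_lt_mul (by omega)
      have hq01 : (u : ZMod (2 ^ (n + 2 + 2))).val / (8 * M) = 0
          ∨ (u : ZMod (2 ^ (n + 2 + 2))).val / (8 * M) = 1 := by
        rcases Nat.lt_or_ge ((u : ZMod (2 ^ (n + 2 + 2))).val / (8 * M)) 1 with h | h
        · exact Or.inl (Nat.lt_one_iff.mp h)
        · exact Or.inr (Nat.le_antisymm (Nat.lt_succ_iff.mp hqlt) h)
      rcases hq01 with h0 | h0
      · left
        apply hval_inj
        rw [hvala]
        rw [h0, Nat.mul_zero, Nat.zero_add] at hdm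
        rw [hmod'] at hdm
        exact hdm.symm
      · right
        apply hval_inj
        rw [hvalb, hM3]
        rw [h0, Nat.mul_one] at hdm
        rw [hmod'] at hdm
        omega
    have hm1 : projUnits (n + 1 + 2) (-1) = -1 := by
      ext
      simp [projUnits]
    have hnegproj : ∀ (u : (ZMod (2 ^ (n + 2 + 2)))ˣ) (v : (ZMod (2 ^ (n + 1 + 2)))ˣ),
        projUnits (n + 1 + 2) u = v → projUnits (n + 1 + 2) (-u) = -v := by
      intro u v huv
      calc projUnits (n + 1 + 2) (-u) = projUnits (n + 1 + 2) ((-1) * u) := by rw [neg_one_mul]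
        _ = projUnits (n + 1 + 2) (-1) * projUnits (n + 1 + 2) u := map_mul _ _ _
        _ = -v := by rw [hm1, huv, neg_one_mul]
    have hpa : projUnits (n + 1 + 2) a' = j := by
      apply Units.ext
      rw [hproj a', hvala, ht, natCast_val_eq]
    have hpb : projUnits (n + 1 + 2) b' = j := by
      apply Units.ext
      rw [hproj b', hvalb]
      rw [Nat.cast_add, ZMod.natCast_self, add_zero, ht, natCast_val_eq]
    have hchar : ∀ u : (ZMod (2 ^ (n + 2 + 2)))ˣ,
        (projUnits (n + 1 + 2) u = j ∨ projUnits (n + 1 + 2) u = -j)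
          ↔ (u = a' ∨ u = b' ∨ u = -a' ∨ u = -b') := by
      intro u
      constructor
      · rintro (hu | hu)
        · rcases hfib u hu with h | h
          · exact Or.inl h
          · exact Or.inr (Or.inl h)
        · have h2 : projUnits (n + 1 + 2) (-u) = j := by
            have h3 := hnegproj u (-j) hu
            rwa [neg_neg] at h3
          rcases hfib (-u) h2 with h | h
          · refine Or.inr (Or.inr (Or.inl ?_))
            have h4 := congrArg Neg.neg h
            rwa [neg_neg] at h4
          · refine Or.inr (Or.inr (Or.inr ?_))
            have h4 := congrArg Neg.neg h
            rwa [neg_neg] at h4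
      · rintro (rfl | rfl | rfl | rfl)
        · exact Or.inl hpa
        · exact Or.inl hpb
        · exact Or.inr (hnegproj a' j hpa)
        · exact Or.inr (hnegproj b' j hpb)
    simp_rw [hchar]
    rw [sum_ite_or4 a' b' (-a') (-b') _
      (hval_ne _ _ (by rw [hvala, hvalb, hM3]; omega))
      (zmodUnits_ne_neg_self (n + 2) a')
      (hval_ne _ _ (by rw [hvala, hvalnb, hM3, hM4]; omega))
      (hval_ne _ _ (by rw [hvalb, hvalna, hM3, hM4]; omega))
      (zmodUnits_ne_neg_self (n + 2) b')
      (fun h => (hval_ne _ _ (by rw [hvala, hvalb, hM3]; omega)) (neg_inj.mp h))]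
    rw [hvala, hvalb, hvalna, hvalnb]
    rw [S_compl2 hSneg hSper (n + 2 + 2) t (by rw [hM4]; omega)]
    rw [S_compl2 hSneg hSper (n + 2 + 2) (t + 2 ^ (n + 1 + 2)) (by rw [hM3, hM4]; omega)]
    have hk := hecke t (n + 2)
    rw [show (2 : ℕ) ^ (n + 2 + 1) = 2 ^ (n + 1 + 2) from rfl] at hk
    linarith [hk]
  · intro hhalf n g
    induction g using QuotientGroup.induction_on with
    | H w =>
    obtain ⟨c, hc⟩ := hhalf (((w : ZMod (2 ^ (n + 2))).val : ℚ) / (2 ^ (n + 2) : ℚ))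
    refine ⟨c, ?_⟩
    rw [xiQ_apply_mk S hSneg hSper n w, hc]
    ring
end

section
/- For every squarefree positive integer M coprime to N, ∑_{x ∈ (ℤ/Mℤ)ˣ} S(x/M) = (∏_{p ∣ M, p prime} (a(p) − 2) − φ(M))·L, where φ denotes Euler's totient function and the sum is over representatives x of the units modulo M. -/
open Finset ArithmeticFunction
open scoped ArithmeticFunction.zeta Function

/-- Sum of `S` over unit fractions with denominator `d`. -/
noncomputable def modSymbUnitSum (S : ℚ → ℝ) (d : ℕ) : ℝ :=
  ∑ x ∈ (Finset.range d).filter (fun x => Nat.gcd x d = 1), S ((x : ℚ) / (d : ℚ))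

lemma modSymbUnitSum_zero (S : ℚ → ℝ) : modSymbUnitSum S 0 = 0 := by
  simp [modSymbUnitSum]

/-- Partition of the full sum over `x/l` according to the gcd of `x` and `l`. -/
lemma sum_range_eq_sum_divisors (S : ℚ → ℝ) (l : ℕ) (hl : l ≠ 0) :
    ∑ x ∈ Finset.range l, S ((x : ℚ) / (l : ℚ)) = ∑ d ∈ l.divisors, modSymbUnitSum S d := by
  have hlpos : 0 < l := Nat.pos_of_ne_zero hl
  unfold modSymbUnitSum
  have hsig := Finset.sum_sigma' l.divisors
    (fun d => (Finset.range d).filter (fun x => Nat.gcd x d = 1))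
    (fun d x => S ((x : ℚ) / (d : ℚ)))
  rw [hsig]
  symm
  refine Finset.sum_nbij' (fun p => p.2 * (l / p.1))
    (fun y => ⟨l / Nat.gcd y l, y / Nat.gcd y l⟩) ?_ ?_ ?_ ?_ ?_
  · rintro ⟨d, x⟩ hp
    rw [Finset.mem_sigma] at hp
    obtain ⟨hd, hx⟩ := hp
    rw [Nat.mem_divisors] at hd
    rw [Finset.mem_filter, Finset.mem_range] at hx
    have hdpos : 0 < d := Nat.pos_of_dvd_of_pos hd.1 hlpos
    have hq : 0 < l / d := Nat.div_pos (Nat.le_of_dvd hlpos hd.1) hdpos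
    rw [Finset.mem_range]
    calc x * (l / d) < d * (l / d) := by exact (Nat.mul_lt_mul_right hq).mpr hx.1
    _ = l := Nat.mul_div_cancel' hd.1
  · intro y hy
    rw [Finset.mem_range] at hy
    have hg : 0 < Nat.gcd y l := Nat.gcd_pos_of_pos_right y hlpos
    rw [Finset.mem_sigma, Nat.mem_divisors, Finset.mem_filter, Finset.mem_range]
    exact ⟨⟨Nat.div_dvd_of_dvd (Nat.gcd_dvd_right y l), hl⟩,
      Nat.div_lt_div_of_lt_of_dvd (Nat.gcd_dvd_right y l) hy,
      Nat.coprime_div_gcd_div_gcd hg⟩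
  · rintro ⟨d, x⟩ hp
    rw [Finset.mem_sigma] at hp
    obtain ⟨hd, hx⟩ := hp
    rw [Nat.mem_divisors] at hd
    rw [Finset.mem_filter, Finset.mem_range] at hx
    have hdpos : 0 < d := Nat.pos_of_dvd_of_pos hd.1 hlpos
    have hq : 0 < l / d := Nat.div_pos (Nat.le_of_dvd hlpos hd.1) hdpos
    obtain ⟨c, hc⟩ := hd.1
    have hcd : l / d = c := by rw [hc]; exact Nat.mul_div_cancel_left c hdpos
    have hgcd : Nat.gcd (x * (l / d)) l = l / d := by
      rw [hcd, hc, Nat.gcd_mul_right, hx.2, one_mul]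
    have h1 : l / (l / d) = d := Nat.div_div_self hd.1 hl
    have h2 : x * (l / d) / (l / d) = x := Nat.mul_div_cancel x hq
    simp only [hgcd, h1, h2]
  · intro y hy
    rw [Finset.mem_range] at hy
    have hg : 0 < Nat.gcd y l := Nat.gcd_pos_of_pos_right y hlpos
    have h1 : l / (l / Nat.gcd y l) = Nat.gcd y l :=
      Nat.div_div_self (Nat.gcd_dvd_right y l) hl
    simp only [h1]
    exact Nat.div_mul_cancel (Nat.gcd_dvd_left y l)
  · rintro ⟨d, x⟩ hp
    rw [Finset.mem_sigma] at hp
    obtain ⟨hd, hx⟩ := hp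
    rw [Nat.mem_divisors] at hd
    have hdpos : 0 < d := Nat.pos_of_dvd_of_pos hd.1 hlpos
    have hq : 0 < l / d := Nat.div_pos (Nat.le_of_dvd hlpos hd.1) hdpos
    have hcast : (l : ℚ) = (d : ℚ) * ((l / d : ℕ) : ℚ) := by
      rw [← Nat.cast_mul, Nat.mul_div_cancel' hd.1]
    have hq' : ((l / d : ℕ) : ℚ) ≠ 0 := Nat.cast_ne_zero.mpr hq.ne'
    congr 1
    push_cast
    rw [hcast, mul_div_mul_right _ _ hq']

/-- The unit sum over `(ZMod M)ˣ` equals `modSymbUnitSum`. -/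
lemma sum_units_eq_modSymbUnitSum (S : ℚ → ℝ) (M : ℕ) [NeZero M] :
    ∑ x : (ZMod M)ˣ, S (((x : ZMod M).val : ℚ) / (M : ℚ)) = modSymbUnitSum S M := by
  unfold modSymbUnitSum
  refine Finset.sum_bij (fun u _ => ((u : (ZMod M)ˣ) : ZMod M).val) ?_ ?_ ?_ ?_
  · intro u _
    rw [Finset.mem_filter, Finset.mem_range]
    exact ⟨ZMod.val_lt _, ZMod.val_coe_unit_coprime u⟩
  · intro u _ v _ h
    exact Units.ext (ZMod.val_injective M h)
  · intro x hx
    rw [Finset.mem_filter, Finset.mem_range] at hx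
    refine ⟨ZMod.unitOfCoprime x hx.2, Finset.mem_univ _, ?_⟩
    show ((ZMod.unitOfCoprime x hx.2 : (ZMod M)ˣ) : ZMod M).val = x
    rw [ZMod.coe_unitOfCoprime, ZMod.val_cast_of_lt hx.1]
  · intro u _
    rfl

/-- Multiplicative functions `a` on squarefree arguments. -/
lemma map_prod_primes (a : ℕ → ℤ) (ha1 : a 1 = 1)
    (hamul : ∀ m k : ℕ, Nat.Coprime m k → a (m * k) = a m * a k)
    (s : Finset ℕ) : (∀ p ∈ s, p.Prime) → a (∏ p ∈ s, p) = ∏ p ∈ s, a p := by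
  classical
  induction s using Finset.induction_on with
  | empty => intro _; simpa using ha1
  | @insert q s' hq ih =>
    intro hs
    rw [Finset.prod_insert hq, Finset.prod_insert hq,
      hamul q (∏ p ∈ s', p) (Nat.Coprime.prod_right fun p hp =>
        (Nat.coprime_primes (hs q (Finset.mem_insert_self q s'))
          (hs p (Finset.mem_insert_of_mem hp))).mpr (fun h => hq (h ▸ hp))),
      ih (fun p hp => hs p (Finset.mem_insert_of_mem hp))]

lemma AF_double_sum (F : ArithmeticFunction ℝ) (m : ℕ) :
    (F * ζ * ζ) m = ∑ l ∈ m.divisors, ∑ e ∈ l.divisors, F e := by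
  rw [coe_mul_zeta_apply]
  exact Finset.sum_congr rfl fun l _ => coe_mul_zeta_apply

lemma AF_tau_sum (F : ArithmeticFunction ℝ) (m : ℕ) :
    (F * ζ * ζ) m = ∑ e ∈ m.divisors, F e * ((m / e).divisors.card : ℝ) := by
  rw [mul_assoc, mul_apply,
    Nat.sum_divisorsAntidiagonal (fun e c => F e * ((ζ : ArithmeticFunction ℝ) * ζ) c)]
  refine Finset.sum_congr rfl fun e _ => ?_
  congr 1
  rw [coe_zeta_mul_apply, Finset.card_eq_sum_ones, Nat.cast_sum]
  refine Finset.sum_congr rfl fun i hi => ?_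
  have h0 : i ≠ 0 := (Nat.pos_of_mem_divisors hi).ne'
  simp [h0]

/-- The totient as a real-valued arithmetic function. -/
noncomputable def PhiR : ArithmeticFunction ℝ := ⟨fun n => (n.totient : ℝ), by simp⟩

lemma PhiR_apply (n : ℕ) : PhiR n = (n.totient : ℝ) := rfl

lemma AF_Phi_eval (m : ℕ) :
    (PhiR * ζ * ζ) m = ((∑ d ∈ Nat.divisors m, d : ℕ) : ℝ) := by
  rw [AF_double_sum, Nat.cast_sum]
  refine Finset.sum_congr rfl fun l hl => ?_
  have : ∑ e ∈ l.divisors, PhiR e = ((∑ e ∈ l.divisors, e.totient : ℕ) : ℝ) := by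
    rw [Nat.cast_sum]; rfl
  rw [this, Nat.sum_totient]

lemma AF_A_eval (a : ℕ → ℤ) (ha1 : a 1 = 1)
    (hamul : ∀ m k : ℕ, Nat.Coprime m k → a (m * k) = a m * a k)
    (m : ℕ) (hm : Squarefree m) :
    ((prodPrimeFactors (fun p => (a p : ℝ) - 2)) * ζ * ζ) m = (a m : ℝ) := by
  set A : ArithmeticFunction ℝ := prodPrimeFactors (fun p => (a p : ℝ) - 2) with hA
  have hz : ((ζ : ArithmeticFunction ℝ)).IsMultiplicative :=
    isMultiplicative_zeta.natCast
  have hW : (A * ζ * ζ).IsMultiplicative :=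
    ((IsMultiplicative.prodPrimeFactors _).mul hz).mul hz
  have hprime : ∀ p ∈ m.primeFactors, p.Prime := fun p hp => Nat.prime_of_mem_primeFactors hp
  have hpw : (↑m.primeFactors : Set ℕ).Pairwise (Nat.Coprime on _root_.id) := by
    intro p hp q hq hpq
    exact (Nat.coprime_primes (hprime p hp) (hprime q hq)).mpr hpq
  have hWp : ∀ p : ℕ, p.Prime → (A * ζ * ζ) p = (a p : ℝ) := by
    intro p hp
    rw [AF_double_sum, Nat.Prime.divisors hp]
    have h1p : (1 : ℕ) ≠ p := fun h => hp.ne_one h.symm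
    rw [Finset.sum_insert (by simp [h1p])]
    rw [Finset.sum_singleton, Nat.Prime.divisors hp, Nat.divisors_one,
      Finset.sum_singleton, Finset.sum_insert (by simp [h1p]), Finset.sum_singleton]
    have hA1 : A 1 = 1 := (IsMultiplicative.prodPrimeFactors _).map_one
    have hAp : A p = (a p : ℝ) - 2 := by
      rw [hA, prodPrimeFactors_apply hp.ne_zero, Nat.Prime.primeFactors hp,
        Finset.prod_singleton]
    rw [hA1, hAp]; ring
  calc (A * ζ * ζ) m = (A * ζ * ζ) (∏ p ∈ m.primeFactors, p) := by
        rw [Nat.prod_primeFactors_of_squarefree hm]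
    _ = ∏ p ∈ m.primeFactors, (A * ζ * ζ) p := hW.map_prod _ _ hpw
    _ = ∏ p ∈ m.primeFactors, ((a p : ℝ)) := Finset.prod_congr rfl fun p hp => hWp p (hprime p hp)
    _ = ((∏ p ∈ m.primeFactors, a p : ℤ) : ℝ) := by push_cast; ring
    _ = (a m : ℝ) := by
        rw [← map_prod_primes a ha1 hamul m.primeFactors hprime,
          Nat.prod_primeFactors_of_squarefree hm]

/-- The key divisor-sum identity: `∑_{e∣m} τ(m/e)·(P(e) − φ(e)) = a(m) − σ(m)` for squarefree `m`. -/
lemma tau_g_sum (a : ℕ → ℤ) (ha1 : a 1 = 1)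
    (hamul : ∀ m k : ℕ, Nat.Coprime m k → a (m * k) = a m * a k)
    (m : ℕ) (hm : Squarefree m) :
    ∑ e ∈ m.divisors,
        ((∏ p ∈ e.primeFactors, ((a p : ℝ) - 2)) - (e.totient : ℝ)) * ((m / e).divisors.card : ℝ)
      = (a m : ℝ) - ((∑ d ∈ Nat.divisors m, d : ℕ) : ℝ) := by
  set A : ArithmeticFunction ℝ := prodPrimeFactors (fun p => (a p : ℝ) - 2) with hA
  have hsplit : ∀ e ∈ m.divisors,
      ((∏ p ∈ e.primeFactors, ((a p : ℝ) - 2)) - (e.totient : ℝ)) * ((m / e).divisors.card : ℝ)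
        = A e * ((m / e).divisors.card : ℝ) - PhiR e * ((m / e).divisors.card : ℝ) := by
    intro e he
    rw [hA, prodPrimeFactors_apply (Nat.pos_of_mem_divisors he).ne', PhiR_apply, sub_mul]
  rw [Finset.sum_congr rfl hsplit, Finset.sum_sub_distrib,
    ← AF_tau_sum A m, ← AF_tau_sum PhiR m, AF_A_eval a ha1 hamul m hm, AF_Phi_eval m]

/-- Main induction: value of the unit-fraction sums. -/
lemma modSymbUnitSum_closed_form
    (N : ℕ) (a : ℕ → ℤ) (ha1 : a 1 = 1)
    (hamul : ∀ m k : ℕ, Nat.Coprime m k → a (m * k) = a m * a k)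
    (S : ℚ → ℝ) (L : ℝ)
    (hL : ∀ M : ℕ, 0 < M → Nat.Coprime M N →
      ((a M : ℝ) - (∑ d ∈ Nat.divisors M, d : ℕ)) * L =
        ∑ l ∈ Nat.divisors M, ∑ x ∈ Finset.range l, S ((x : ℚ) / (l : ℚ))) :
    ∀ m : ℕ, 0 < m → Squarefree m → Nat.Coprime m N →
      modSymbUnitSum S m
        = ((∏ p ∈ m.primeFactors, ((a p : ℝ) - 2)) - (m.totient : ℝ)) * L := by
  set Ua : ArithmeticFunction ℝ := ⟨fun d => modSymbUnitSum S d, modSymbUnitSum_zero S⟩ with hUa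
  have hUapp : ∀ d, Ua d = modSymbUnitSum S d := fun d => rfl
  have hKey : ∀ m : ℕ, 0 < m → Nat.Coprime m N →
      ∑ e ∈ m.divisors, modSymbUnitSum S e * ((m / e).divisors.card : ℝ)
        = ((a m : ℝ) - ((∑ d ∈ Nat.divisors m, d : ℕ) : ℝ)) * L := by
    intro m hm hcop
    have h1 : ∑ e ∈ m.divisors, modSymbUnitSum S e * ((m / e).divisors.card : ℝ)
        = (Ua * ζ * ζ) m := (AF_tau_sum Ua m).symm
    rw [h1, AF_double_sum, hL m hm hcop]
    refine Finset.sum_congr rfl fun l hl => ?_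
    rw [sum_range_eq_sum_divisors S l (Nat.pos_of_mem_divisors hl).ne']
    exact Finset.sum_congr rfl fun d _ => rfl
  intro m
  induction m using Nat.strong_induction_on with
  | _ m ih =>
  intro hm hsf hcop
  have key := hKey m hm hcop
  rw [← Nat.cons_self_properDivisors hm.ne', Finset.sum_cons] at key
  rw [Nat.div_self hm, Nat.divisors_one, Finset.card_singleton, Nat.cast_one, mul_one] at key
  -- rewrite each proper divisor term using the induction hypothesis
  have hproper : ∀ e ∈ m.properDivisors,
      modSymbUnitSum S e * ((m / e).divisors.card : ℝ)
        = (((∏ p ∈ e.primeFactors, ((a p : ℝ) - 2)) - (e.totient : ℝ)) * ((m / e).divisors.card : ℝ)) * L := by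
    intro e he
    rw [Nat.mem_properDivisors] at he
    have hepos : 0 < e := Nat.pos_of_dvd_of_pos he.1 hm
    rw [ih e he.2 hepos (hsf.squarefree_of_dvd he.1) (Nat.Coprime.coprime_dvd_left he.1 hcop)]
    ring
  rw [Finset.sum_congr rfl hproper, ← Finset.sum_mul] at key
  -- the arithmetic identity, with the `e = m` term split off
  have hid := tau_g_sum a ha1 hamul m hsf
  rw [← Nat.cons_self_properDivisors hm.ne', Finset.sum_cons, Nat.div_self hm,
    Nat.divisors_one, Finset.card_singleton, Nat.cast_one, mul_one] at hid
  -- conclude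
  linear_combination key - hid * L

/-- For every squarefree positive integer `M` coprime to `N`,
`∑_{x ∈ (ℤ/Mℤ)ˣ} S(x/M) = (∏_{p ∣ M} (a(p) − 2) − φ(M))·L`. -/
theorem sum_modSymb_units_eq
    (N : ℕ) (hN : Odd N)
    (a : ℕ → ℤ) (ha1 : a 1 = 1)
    (hamul : ∀ m k : ℕ, Nat.Coprime m k → a (m * k) = a m * a k)
    (S : ℚ → ℝ)
    (hS0 : S 0 = 0) (hSneg : ∀ β : ℚ, S (-β) = S β) (hSper : ∀ β : ℚ, S (β + 1) = S β)
    (hHecke : ∀ ℓ : ℕ, ℓ.Prime → ¬(ℓ ∣ N) → ∀ β : ℚ, Nat.Coprime β.den N →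
      ∑ x ∈ Finset.range ℓ, S ((β + (x : ℚ)) / (ℓ : ℚ)) =
        (a ℓ : ℝ) * S β - S ((ℓ : ℚ) * β) + ∑ x ∈ Finset.range ℓ, S ((x : ℚ) / (ℓ : ℚ)))
    (L : ℝ)
    (hL : ∀ M : ℕ, 0 < M → Nat.Coprime M N →
      ((a M : ℝ) - (∑ d ∈ Nat.divisors M, d : ℕ)) * L =
        ∑ l ∈ Nat.divisors M, ∑ x ∈ Finset.range l, S ((x : ℚ) / (l : ℚ)))
    (M : ℕ) [NeZero M] (hMsf : Squarefree M) (hMN : Nat.Coprime M N) :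
    ∑ x : (ZMod M)ˣ, S (((x : ZMod M).val : ℚ) / (M : ℚ)) =
      ((∏ p ∈ M.primeFactors, ((a p : ℝ) - 2)) - (Nat.totient M : ℝ)) * L := by
  rw [sum_units_eq_modSymbUnitSum S M]
  exact modSymbUnitSum_closed_form N a ha1 hamul S L hL M
    (Nat.pos_of_ne_zero (NeZero.ne M)) hMsf hMN
end

section
/- Let M be a squarefree positive integer coprime to N, let ℓ be a prime dividing M, and let ψ be a nontrivial complex-valued Dirichlet character modulo M/ℓ. Then ∑_{x ∈ (ℤ/Mℤ)ˣ} ψ(x)·S(x/M) = (a(ℓ) − ψ(ℓ) − ψ(ℓ)⁻¹)·∑_{y ∈ (ℤ/(M/ℓ)ℤ)ˣ} ψ(y)·S(y/(M/ℓ)), where ψ is evaluated on integer representatives reduced modulo M/ℓ and ψ(ℓ)⁻¹ is the inverse (equal to the complex conjugate) of the root of unity ψ(ℓ). -/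
private lemma S_add_int (S : ℚ → ℝ) (hSper : ∀ β : ℚ, S (β + 1) = S β) :
    ∀ (t : ℤ) (β : ℚ), S (β + t) = S β := by
  intro t
  induction t using Int.induction_on with
  | zero => intro β; simp
  | succ k ih =>
    intro β
    have h : (β + ((k : ℤ) + 1 : ℤ)) = (β + (k : ℤ)) + 1 := by push_cast; ring
    rw [h, hSper, ih]
  | pred k ih =>
    intro β
    have h : (β + (-(k : ℤ) - 1 : ℤ)) + 1 = β + (-(k : ℤ) : ℤ) := by push_cast; ring
    have h2 := hSper (β + (-(k : ℤ) - 1 : ℤ))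
    rw [h] at h2
    rw [← h2] at *
    exact ih β ▸ h2 ▸ rfl

private lemma S_mod (S : ℚ → ℝ) (hSper : ∀ β : ℚ, S (β + 1) = S β) {n : ℕ} (hn : (n : ℚ) ≠ 0)
    (j k : ℕ) (h : j % n = k % n) : S ((j : ℚ) / n) = S ((k : ℚ) / n) := by
  have key : ∀ m : ℕ, S ((m : ℚ) / n) = S (((m % n : ℕ) : ℚ) / n) := by
    intro m
    conv_lhs => rw [← Nat.mod_add_div m n]
    have h2 : (((m % n + n * (m / n) : ℕ) : ℚ)) / n = ((m % n : ℕ) : ℚ) / n + ((m / n : ℕ) : ℤ) := by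
      push_cast
      field_simp
      norm_cast
      rw [Nat.mul_comm]
      push_cast
      ring
    rw [h2, S_add_int S hSper]
  rw [key j, key k, h]

/-- Let `M = ℓ·M'` be squarefree, coprime to `N`, with `ℓ` prime, and let `ψ` be a nontrivial
Dirichlet character modulo `M' = M/ℓ`. Then
`∑_{x ∈ (ℤ/Mℤ)ˣ} ψ(x)·S(x/M) = (a(ℓ) − ψ(ℓ) − ψ(ℓ)⁻¹)·∑_{y ∈ (ℤ/M'ℤ)ˣ} ψ(y)·S(y/M')`. -/
theorem twisted_sum_modSymb_euler_factor
    (N : ℕ) (hN : Odd N)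
    (a : ℕ → ℤ) (ha1 : a 1 = 1)
    (hamul : ∀ m k : ℕ, Nat.Coprime m k → a (m * k) = a m * a k)
    (S : ℚ → ℝ)
    (hS0 : S 0 = 0) (hSneg : ∀ β : ℚ, S (-β) = S β) (hSper : ∀ β : ℚ, S (β + 1) = S β)
    (hHecke : ∀ ℓ : ℕ, ℓ.Prime → ¬(ℓ ∣ N) → ∀ β : ℚ, Nat.Coprime β.den N →
      ∑ x ∈ Finset.range ℓ, S ((β + (x : ℚ)) / (ℓ : ℚ)) =
        (a ℓ : ℝ) * S β - S ((ℓ : ℚ) * β) + ∑ x ∈ Finset.range ℓ, S ((x : ℚ) / (ℓ : ℚ)))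
    (ℓ M' : ℕ) [NeZero M'] [NeZero (ℓ * M')] (hl : ℓ.Prime) (hsf : Squarefree (ℓ * M'))
    (hcop : Nat.Coprime (ℓ * M') N)
    (ψ : DirichletCharacter ℂ M') (hψ : ψ ≠ 1) :
    ∑ x : (ZMod (ℓ * M'))ˣ,
        ψ (((x : ZMod (ℓ * M')).val : ZMod M')) * (S (((x : ZMod (ℓ * M')).val : ℚ) / (ℓ * M' : ℚ)) : ℂ) =
      ((a ℓ : ℂ) - ψ (ℓ : ZMod M') - (ψ (ℓ : ZMod M'))⁻¹) *
        ∑ y : (ZMod M')ˣ, ψ (y : ZMod M') * (S (((y : ZMod M').val : ℚ) / (M' : ℚ)) : ℂ) := by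
  classical
  haveI : Fact ℓ.Prime := ⟨hl⟩
  have hℓM' : Nat.Coprime ℓ M' := Nat.coprime_of_squarefree_mul hsf
  have hM'0 : (M' : ℚ) ≠ 0 := Nat.cast_ne_zero.mpr (NeZero.ne M')
  have hℓ0 : (ℓ : ℚ) ≠ 0 := Nat.cast_ne_zero.mpr hl.pos.ne'
  have hM'N : Nat.Coprime M' N := Nat.Coprime.coprime_dvd_left ⟨ℓ, mul_comm ℓ M'⟩ hcop
  have hℓN : ¬ ℓ ∣ N :=
    (Nat.Prime.coprime_iff_not_dvd hl).mp (Nat.Coprime.coprime_dvd_left ⟨M', rfl⟩ hcop)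
  have hM'ℓ : (M' : ZMod ℓ) ≠ 0 := by
    rw [Ne, ZMod.natCast_eq_zero_iff]
    exact (Nat.Prime.coprime_iff_not_dvd hl).mp hℓM'
  set e := ZMod.chineseRemainder hℓM' with he_def
  -- value of e on natural number casts
  have heN : ∀ k : ℕ, e ((k : ℕ) : ZMod (ℓ * M')) = ((k : ZMod ℓ), (k : ZMod M')) := by
    intro k
    have h1 : e ((k : ℕ) : ZMod (ℓ * M')) = ((k : ℕ) : ZMod ℓ × ZMod M') :=
      map_natCast (e : ZMod (ℓ * M') →+* ZMod ℓ × ZMod M') k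
    rw [h1]
    exact Prod.ext (by simp) (by simp)
  have heval : ∀ w : ZMod (ℓ * M'), e w = ((w.val : ZMod ℓ), (w.val : ZMod M')) := by
    intro w
    conv_lhs => rw [← ZMod.natCast_zmod_val w]
    exact heN w.val
  -- the units equivalence
  let E : (ZMod (ℓ * M'))ˣ ≃ (ZMod ℓ)ˣ × (ZMod M')ˣ :=
    ((Units.mapEquiv e.toMulEquiv).trans MulEquiv.prodUnits).toEquiv
  have hE1 : ∀ x : (ZMod (ℓ * M'))ˣ, ((E x).1 : ZMod ℓ) = ((x : ZMod (ℓ * M')).val : ZMod ℓ) := by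
    intro x
    have : ((E x).1 : ZMod ℓ) = (e (x : ZMod (ℓ * M'))).1 := rfl
    rw [this, heval]
  have hE2 : ∀ x : (ZMod (ℓ * M'))ˣ, ((E x).2 : ZMod M') = ((x : ZMod (ℓ * M')).val : ZMod M') := by
    intro x
    have : ((E x).2 : ZMod M') = (e (x : ZMod (ℓ * M'))).2 := rfl
    rw [this, heval]
  have hEsymm : ∀ p : (ZMod ℓ)ˣ × (ZMod M')ˣ,
      e ((E.symm p : (ZMod (ℓ * M'))ˣ) : ZMod (ℓ * M')) = ((p.1 : ZMod ℓ), (p.2 : ZMod M')) := by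
    intro p
    rw [heval, ← hE1 (E.symm p), ← hE2 (E.symm p), Equiv.apply_symm_apply]
  have hsymm_nat : ∀ (c : ZMod ℓ) (d : ZMod M') (k : ℕ), (k : ZMod ℓ) = c → (k : ZMod M') = d →
      e.symm (c, d) = ((k : ℕ) : ZMod (ℓ * M')) := by
    intro c d k h1 h2
    apply e.injective
    rw [RingEquiv.apply_symm_apply, heN, h1, h2]
  have hden : ∀ v : (ZMod M')ˣ, ((((v : ZMod M').val : ℚ) / (M' : ℚ)).den).Coprime N := by
    intro v
    have h1 := Rat.den_dvd ((v : ZMod M').val : ℤ) (M' : ℤ)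
    rw [Rat.divInt_eq_div] at h1
    have h2 : (((v : ZMod M').val : ℤ) : ℚ) / ((M' : ℤ) : ℚ) = ((v : ZMod M').val : ℚ) / (M' : ℚ) := by
      push_cast; ring
    rw [h2] at h1
    exact Nat.Coprime.coprime_dvd_left (Int.ofNat_dvd.mp h1) hM'N
  set uℓ : (ZMod M')ˣ := ZMod.unitOfCoprime ℓ hℓM' with huℓ_def
  have huℓ : ((uℓ : (ZMod M')ˣ) : ZMod M') = (ℓ : ZMod M') := ZMod.coe_unitOfCoprime ℓ hℓM'
  -- the key real identity, for each unit v mod M'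
  have key : ∀ v : (ZMod M')ˣ,
      S ((((uℓ⁻¹ * v : (ZMod M')ˣ) : ZMod M').val : ℚ) / (M' : ℚ)) +
        ∑ u : (ZMod ℓ)ˣ, S ((((E.symm (u, v) : (ZMod (ℓ * M'))ˣ) : ZMod (ℓ * M')).val : ℚ) /
          ((ℓ : ℚ) * (M' : ℚ))) =
      (a ℓ : ℝ) * S (((v : ZMod M').val : ℚ) / (M' : ℚ)) -
        S ((((uℓ * v : (ZMod M')ˣ) : ZMod M').val : ℚ) / (M' : ℚ)) +
        ∑ x ∈ Finset.range ℓ, S ((x : ℚ) / (ℓ : ℚ)) := by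
    intro v
    have hH := hHecke ℓ hl hℓN (((v : ZMod M').val : ℚ) / (M' : ℚ)) (hden v)
    have sdenom : ∀ j k : ℕ, j % (ℓ * M') = k % (ℓ * M') →
        S ((j : ℚ) / ((ℓ : ℚ) * (M' : ℚ))) = S ((k : ℚ) / ((ℓ : ℚ) * (M' : ℚ))) := by
      intro j k h
      have := S_mod S hSper (n := ℓ * M') (by exact_mod_cast mul_ne_zero hℓ0 hM'0) j k h
      push_cast at this
      exact this
    have stepA : ∑ x ∈ Finset.range ℓ, S (((((v : ZMod M').val : ℚ) / (M' : ℚ)) + (x : ℚ)) / (ℓ : ℚ))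
        = ∑ c : ZMod ℓ, S (((e.symm (c, (v : ZMod M'))).val : ℚ) / ((ℓ : ℚ) * (M' : ℚ))) := by
      refine Finset.sum_nbij' (i := fun x => ((((v : ZMod M').val + x * M' : ℕ) : ZMod ℓ)))
        (j := fun c => ((c - (((v : ZMod M').val : ℕ) : ZMod ℓ)) * (M' : ZMod ℓ)⁻¹).val)
        (fun x _ => Finset.mem_univ _) (fun c _ => Finset.mem_range.mpr (ZMod.val_lt _))
        ?_ ?_ ?_
      · intro x hx
        have h1 : (((((v : ZMod M').val + x * M' : ℕ) : ZMod ℓ)) - (((v : ZMod M').val : ℕ) : ZMod ℓ))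
            * (M' : ZMod ℓ)⁻¹ = (x : ZMod ℓ) := by
          push_cast
          rw [add_sub_cancel_left, mul_inv_cancel_right₀ hM'ℓ]
        rw [h1, ZMod.val_cast_of_lt (Finset.mem_range.mp hx)]
      · intro c _
        push_cast [ZMod.natCast_zmod_val]
        rw [inv_mul_cancel_right₀ hM'ℓ, add_sub_cancel]
      · intro x hx
        have hk2 : (((v : ZMod M').val + x * M' : ℕ) : ZMod M') = (v : ZMod M') := by
          rw [Nat.cast_add, Nat.cast_mul, ZMod.natCast_self, mul_zero, add_zero,
            ZMod.natCast_zmod_val]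
        rw [hsymm_nat _ _ _ rfl hk2, ZMod.val_natCast]
        have harith : ((((v : ZMod M').val : ℚ) / (M' : ℚ)) + (x : ℚ)) / (ℓ : ℚ)
            = ((((v : ZMod M').val + x * M' : ℕ) : ℚ)) / ((ℓ : ℚ) * (M' : ℚ)) := by
          push_cast
          rw [div_add' _ _ _ hM'0, div_div, mul_comm (M' : ℚ) (ℓ : ℚ)]
        rw [harith]
        exact (sdenom _ _ (Nat.mod_mod_of_dvd _ dvd_rfl)).symm
    have hsplit : ∑ c : ZMod ℓ, S (((e.symm (c, (v : ZMod M'))).val : ℚ) / ((ℓ : ℚ) * (M' : ℚ)))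
        = S (((e.symm (0, (v : ZMod M'))).val : ℚ) / ((ℓ : ℚ) * (M' : ℚ))) +
          ∑ u : (ZMod ℓ)ˣ, S (((e.symm ((u : ZMod ℓ), (v : ZMod M'))).val : ℚ) / ((ℓ : ℚ) * (M' : ℚ))) := by
      rw [← Finset.add_sum_erase _ _ (Finset.mem_univ (0 : ZMod ℓ))]
      congr 1
      refine (Finset.sum_bij (fun (u : (ZMod ℓ)ˣ) _ => (u : ZMod ℓ)) ?_ ?_ ?_ ?_).symm
      · intro u _
        exact Finset.mem_erase.mpr ⟨Units.ne_zero u, Finset.mem_univ _⟩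
      · intro u _ u' _ h
        exact Units.ext h
      · intro c hc
        exact ⟨Units.mk0 c (Finset.mem_erase.mp hc).1, Finset.mem_univ _, rfl⟩
      · intro u _
        rfl
    have hF0 : S (((e.symm (0, (v : ZMod M'))).val : ℚ) / ((ℓ : ℚ) * (M' : ℚ)))
        = S ((((uℓ⁻¹ * v : (ZMod M')ˣ) : ZMod M').val : ℚ) / (M' : ℚ)) := by
      have hw : e.symm ((0 : ZMod ℓ), (v : ZMod M'))
          = ((ℓ * ((uℓ⁻¹ * v : (ZMod M')ˣ) : ZMod M').val : ℕ) : ZMod (ℓ * M')) := by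
        refine hsymm_nat _ _ _ ?_ ?_
        · push_cast [ZMod.natCast_self]
          ring
        · rw [Nat.cast_mul, ZMod.natCast_zmod_val, ← huℓ,
            show (uℓ : ZMod M') * ((uℓ⁻¹ * v : (ZMod M')ˣ) : ZMod M')
              = ((uℓ * (uℓ⁻¹ * v) : (ZMod M')ˣ) : ZMod M') from (Units.val_mul _ _).symm,
            mul_inv_cancel_left]
      have hwlt : ℓ * ((uℓ⁻¹ * v : (ZMod M')ˣ) : ZMod M').val < ℓ * M' :=
        mul_lt_mul_of_pos_left (ZMod.val_lt _) hl.pos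
      rw [hw, ZMod.val_natCast, Nat.mod_eq_of_lt hwlt]
      have : ((ℓ * ((uℓ⁻¹ * v : (ZMod M')ˣ) : ZMod M').val : ℕ) : ℚ) / ((ℓ : ℚ) * (M' : ℚ))
          = (((uℓ⁻¹ * v : (ZMod M')ˣ) : ZMod M').val : ℚ) / (M' : ℚ) := by
        push_cast
        rw [mul_div_mul_left _ _ hℓ0]
      rw [this]
    have hFu : ∀ u : (ZMod ℓ)ˣ, e.symm ((u : ZMod ℓ), (v : ZMod M'))
        = ((E.symm (u, v) : (ZMod (ℓ * M'))ˣ) : ZMod (ℓ * M')) := by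
      intro u
      apply e.injective
      rw [RingEquiv.apply_symm_apply, hEsymm (u, v)]
    have hCeq : S ((ℓ : ℚ) * (((v : ZMod M').val : ℚ) / (M' : ℚ)))
        = S ((((uℓ * v : (ZMod M')ˣ) : ZMod M').val : ℚ) / (M' : ℚ)) := by
      have h1 : (ℓ : ℚ) * (((v : ZMod M').val : ℚ) / (M' : ℚ))
          = ((ℓ * (v : ZMod M').val : ℕ) : ℚ) / (M' : ℚ) := by
        push_cast
        ring
      have h2 : ((uℓ * v : (ZMod M')ˣ) : ZMod M') = ((ℓ * (v : ZMod M').val : ℕ) : ZMod M') := by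
        rw [Units.val_mul, huℓ]
        push_cast [ZMod.natCast_zmod_val]
        ring
      have h3 : ((uℓ * v : (ZMod M')ˣ) : ZMod M').val = (ℓ * (v : ZMod M').val) % M' := by
        rw [h2, ZMod.val_natCast]
      rw [h1, h3]
      exact (S_mod S hSper hM'0 _ _ (Nat.mod_mod_of_dvd _ dvd_rfl)).symm
    rw [stepA, hsplit, hF0] at hH
    rw [hCeq] at hH
    simp only [hFu] at hH
    exact hH
  -- notation for the twisted sum mod M'
  set T : ℂ := ∑ y : (ZMod M')ˣ, ψ (y : ZMod M') * (S (((y : ZMod M').val : ℚ) / (M' : ℚ)) : ℂ)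
    with hT_def
  have hzero : ∑ v : (ZMod M')ˣ, ψ (v : ZMod M') = 0 := by
    have h0 : ∑ b : ZMod M', ψ b = 0 := MulChar.sum_eq_zero_of_ne_one hψ
    rw [← h0, ← Finset.sum_filter_of_ne (p := fun b : ZMod M' => IsUnit b)
      (fun b _ hb => by by_contra h; exact hb (ψ.map_nonunit h))]
    refine Finset.sum_bij (fun (u : (ZMod M')ˣ) _ => (u : ZMod M')) ?_ ?_ ?_ ?_
    · intro u _
      exact Finset.mem_filter.mpr ⟨Finset.mem_univ _, u.isUnit⟩
    · intro u _ u' _ h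
      exact Units.ext h
    · intro b hb
      exact ⟨(Finset.mem_filter.mp hb).2.unit, Finset.mem_univ _,
        (Finset.mem_filter.mp hb).2.unit_spec⟩
    · intro u _
      rfl
  have hinv : ψ ((uℓ⁻¹ : (ZMod M')ˣ) : ZMod M') = (ψ (ℓ : ZMod M'))⁻¹ := by
    have h1 : ψ ((uℓ⁻¹ : (ZMod M')ˣ) : ZMod M') * ψ (ℓ : ZMod M') = 1 := by
      rw [← huℓ, ← map_mul,
        show ((uℓ⁻¹ : (ZMod M')ˣ) : ZMod M') * (uℓ : ZMod M')
          = ((uℓ⁻¹ * uℓ : (ZMod M')ˣ) : ZMod M') from (Units.val_mul _ _).symm]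
      simp
    exact eq_inv_of_mul_eq_one_left h1
  have hgoal : ∑ x : (ZMod (ℓ * M'))ˣ,
      ψ (((x : ZMod (ℓ * M')).val : ZMod M')) *
        (S (((x : ZMod (ℓ * M')).val : ℚ) / (ℓ * M' : ℚ)) : ℂ)
      = ∑ v : (ZMod M')ˣ, ∑ u : (ZMod ℓ)ˣ, ψ (v : ZMod M') *
          (S ((((E.symm (u, v) : (ZMod (ℓ * M'))ˣ) : ZMod (ℓ * M')).val : ℚ) /
            ((ℓ : ℚ) * (M' : ℚ))) : ℂ) := by
    rw [Fintype.sum_equiv E _ (fun p => ψ ((p.2 : ZMod M')) *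
        (S ((((E.symm p : (ZMod (ℓ * M'))ˣ) : ZMod (ℓ * M')).val : ℚ) /
          ((ℓ : ℚ) * (M' : ℚ))) : ℂ)) ?_]
    · rw [Fintype.sum_prod_type]
      exact Finset.sum_comm
    · intro x
      rw [Equiv.symm_apply_apply, hE2]
  rw [hgoal]
  have keyC : ∀ v : (ZMod M')ˣ, ∑ u : (ZMod ℓ)ˣ, ψ (v : ZMod M') *
      (S ((((E.symm (u, v) : (ZMod (ℓ * M'))ˣ) : ZMod (ℓ * M')).val : ℚ) /
        ((ℓ : ℚ) * (M' : ℚ))) : ℂ)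
      = ψ (v : ZMod M') * ((a ℓ : ℂ) * (S (((v : ZMod M').val : ℚ) / (M' : ℚ)) : ℂ)
          - (S ((((uℓ * v : (ZMod M')ˣ) : ZMod M').val : ℚ) / (M' : ℚ)) : ℂ)
          + ((∑ x ∈ Finset.range ℓ, S ((x : ℚ) / (ℓ : ℚ)) : ℝ) : ℂ))
        - ψ (v : ZMod M') *
          (S ((((uℓ⁻¹ * v : (ZMod M')ˣ) : ZMod M').val : ℚ) / (M' : ℚ)) : ℂ) := by
    intro v
    have h := congrArg (fun r : ℝ => (r : ℂ)) (key v)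
    push_cast at h
    rw [← Finset.mul_sum]
    push_cast
    linear_combination (ψ ((v : (ZMod M')ˣ) : ZMod M')) * h
  rw [Finset.sum_congr rfl (fun v _ => keyC v), Finset.sum_sub_distrib]
  have hB : ∑ v : (ZMod M')ˣ, ψ (v : ZMod M') *
      (S ((((uℓ⁻¹ * v : (ZMod M')ˣ) : ZMod M').val : ℚ) / (M' : ℚ)) : ℂ)
      = ψ (ℓ : ZMod M') * T := by
    rw [← Equiv.sum_comp (Equiv.mulLeft uℓ) (fun v : (ZMod M')ˣ => ψ (v : ZMod M') *
      (S ((((uℓ⁻¹ * v : (ZMod M')ˣ) : ZMod M').val : ℚ) / (M' : ℚ)) : ℂ)), hT_def,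
      Finset.mul_sum]
    refine Finset.sum_congr rfl fun y _ => ?_
    simp only [Equiv.coe_mulLeft, inv_mul_cancel_left, Units.val_mul, map_mul, huℓ]
    ring
  have hA2 : ∑ v : (ZMod M')ˣ, ψ (v : ZMod M') *
      (S ((((uℓ * v : (ZMod M')ˣ) : ZMod M').val : ℚ) / (M' : ℚ)) : ℂ)
      = (ψ (ℓ : ZMod M'))⁻¹ * T := by
    rw [← Equiv.sum_comp (Equiv.mulLeft uℓ⁻¹) (fun v : (ZMod M')ˣ => ψ (v : ZMod M') *
      (S ((((uℓ * v : (ZMod M')ˣ) : ZMod M').val : ℚ) / (M' : ℚ)) : ℂ)), hT_def,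
      Finset.mul_sum]
    refine Finset.sum_congr rfl fun y _ => ?_
    simp only [Equiv.coe_mulLeft, mul_inv_cancel_left, Units.val_mul, map_mul, hinv]
    ring
  have hexp : ∀ v : (ZMod M')ˣ, ψ (v : ZMod M') *
      ((a ℓ : ℂ) * (S (((v : ZMod M').val : ℚ) / (M' : ℚ)) : ℂ)
        - (S ((((uℓ * v : (ZMod M')ˣ) : ZMod M').val : ℚ) / (M' : ℚ)) : ℂ)
        + ((∑ x ∈ Finset.range ℓ, S ((x : ℚ) / (ℓ : ℚ)) : ℝ) : ℂ))
      = (a ℓ : ℂ) * (ψ (v : ZMod M') * (S (((v : ZMod M').val : ℚ) / (M' : ℚ)) : ℂ))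
        - ψ (v : ZMod M') * (S ((((uℓ * v : (ZMod M')ˣ) : ZMod M').val : ℚ) / (M' : ℚ)) : ℂ)
        + ψ (v : ZMod M') * ((∑ x ∈ Finset.range ℓ, S ((x : ℚ) / (ℓ : ℚ)) : ℝ) : ℂ) :=
    fun v => by ring
  rw [Finset.sum_congr rfl (fun v _ => hexp v), Finset.sum_add_distrib,
    Finset.sum_sub_distrib, ← Finset.mul_sum, ← Finset.sum_mul, hzero, hA2, hB, ← hT_def]
  ring
end

section
/- Let ℓ be a prime not dividing N and let M = ℓⁿ for an integer n ≥ 1. Then ∑_{x ∈ (ℤ/Mℤ)ˣ} S(x/M) = ((a(ℓⁿ) − 2a(ℓ^{n−1}) + a(ℓ^{n−2})) − φ(M))·L, where φ is Euler's totient function and the convention a(ℓ^{−1}) = 0 is used when n = 1. -/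
open Finset

/-- For `ℓ` a prime not dividing `N` and `M = ℓⁿ` (`n ≥ 1`),
`∑_{x ∈ (ℤ/Mℤ)ˣ} S(x/M) = ((a(ℓⁿ) − 2a(ℓ^{n−1}) + a(ℓ^{n−2})) − φ(M))·L`,
with the convention `a(ℓ^{−1}) = 0` when `n = 1`. -/
theorem sum_modSymb_units_prime_power
    (N : ℕ) (hN : Odd N)
    (a : ℕ → ℤ) (ha1 : a 1 = 1)
    (hamul : ∀ m k : ℕ, Nat.Coprime m k → a (m * k) = a m * a k)
    (S : ℚ → ℝ)
    (hS0 : S 0 = 0) (hSneg : ∀ β : ℚ, S (-β) = S β) (hSper : ∀ β : ℚ, S (β + 1) = S β)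
    (hHecke : ∀ ℓ : ℕ, ℓ.Prime → ¬(ℓ ∣ N) → ∀ β : ℚ, Nat.Coprime β.den N →
      ∑ x ∈ Finset.range ℓ, S ((β + (x : ℚ)) / (ℓ : ℚ)) =
        (a ℓ : ℝ) * S β - S ((ℓ : ℚ) * β) + ∑ x ∈ Finset.range ℓ, S ((x : ℚ) / (ℓ : ℚ)))
    (L : ℝ)
    (hL : ∀ M : ℕ, 0 < M → Nat.Coprime M N →
      ((a M : ℝ) - (∑ d ∈ Nat.divisors M, d : ℕ)) * L =
        ∑ l ∈ Nat.divisors M, ∑ x ∈ Finset.range l, S ((x : ℚ) / (l : ℚ)))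
    (ℓ : ℕ) [NeZero ℓ] (hl : ℓ.Prime) (hlN : ¬(ℓ ∣ N)) (n : ℕ) (hn : 1 ≤ n) :
    ∑ x : (ZMod (ℓ ^ n))ˣ, S (((x : ZMod (ℓ ^ n)).val : ℚ) / ((ℓ : ℚ) ^ n)) =
      (((a (ℓ ^ n) : ℝ) - 2 * (a (ℓ ^ (n - 1)) : ℝ) +
          (if 2 ≤ n then (a (ℓ ^ (n - 2)) : ℝ) else 0)) - (Nat.totient (ℓ ^ n) : ℝ)) * L := by
  have hlpos : 0 < ℓ := hl.pos
  obtain ⟨m, rfl⟩ : ∃ m, n = m + 1 := ⟨n - 1, (Nat.succ_pred_eq_of_pos hn).symm⟩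
  -- `T M = ∑_{x < M} S(x/M)` and the geometric sums `G`
  set T : ℕ → ℝ := fun M => ∑ x ∈ Finset.range M, S ((x : ℚ) / (M : ℚ)) with hTdef
  set G : ℕ → ℝ := fun j => ∑ i ∈ range j, (ℓ : ℝ) ^ i with hGdef
  have hG : ∀ j : ℕ, G (j + 1) = G j + (ℓ : ℝ) ^ j := fun j => Finset.sum_range_succ _ _
  have hT1 : T 1 = 0 := by simp [hTdef, hS0]
  -- `A k` from Manin's formula
  have hA : ∀ k : ℕ, ((a (ℓ ^ k) : ℝ) - G (k + 1)) * L = ∑ i ∈ range (k + 1), T (ℓ ^ i) := by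
    intro k
    have hcop : Nat.Coprime (ℓ ^ k) N := (hl.coprime_iff_not_dvd.mpr hlN).pow_left k
    have h1 := hL (ℓ ^ k) (pow_pos hlpos k) hcop
    rw [Nat.sum_divisors_prime_pow hl] at h1
    push_cast at h1
    rw [Nat.sum_divisors_prime_pow hl] at h1
    exact h1
  have hTk : ∀ k : ℕ, T (ℓ ^ (k + 1)) =
      ((a (ℓ ^ (k + 1)) : ℝ) - G (k + 2)) * L - ((a (ℓ ^ k) : ℝ) - G (k + 1)) * L := by
    intro k
    rw [hA k, hA (k + 1), Finset.sum_range_succ]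
    ring
  -- units sum = coprime-filtered sum
  haveI : NeZero (ℓ ^ (m + 1)) := ⟨pow_ne_zero _ hlpos.ne'⟩
  have hU : ∑ x : (ZMod (ℓ ^ (m + 1)))ˣ, S (((x : ZMod (ℓ ^ (m + 1))).val : ℚ) / ((ℓ : ℚ) ^ (m + 1)))
      = ∑ y ∈ (range (ℓ ^ (m + 1))).filter (fun y => Nat.Coprime y (ℓ ^ (m + 1))),
          S ((y : ℚ) / ((ℓ : ℚ) ^ (m + 1))) := by
    refine Finset.sum_bij' (fun x _ => (x : ZMod (ℓ ^ (m + 1))).val)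
      (fun y hy => ZMod.unitOfCoprime y (Finset.mem_filter.mp hy).2) ?_ ?_ ?_ ?_ ?_
    · intro x _
      exact Finset.mem_filter.mpr ⟨Finset.mem_range.mpr (ZMod.val_lt _),
        ZMod.val_coe_unit_coprime x⟩
    · intro y hy; exact Finset.mem_univ _
    · intro x _
      apply Units.ext
      simp [ZMod.coe_unitOfCoprime, ZMod.natCast_zmod_val]
    · intro y hy
      have : y < ℓ ^ (m + 1) := Finset.mem_range.mp (Finset.mem_filter.mp hy).1
      simp [ZMod.coe_unitOfCoprime, ZMod.val_natCast, Nat.mod_eq_of_lt this]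
    · intro x _; rfl
  -- non-coprime part = T (ℓ ^ m)
  have hkey : ∀ x : ℕ, ¬ Nat.Coprime x (ℓ ^ (m + 1)) ↔ ℓ ∣ x := by
    intro x
    rw [Nat.coprime_pow_right_iff (Nat.succ_pos m), Nat.coprime_comm,
      hl.coprime_iff_not_dvd, not_not]
  have hNC : ∑ x ∈ (range (ℓ ^ (m + 1))).filter (fun y => ¬ Nat.Coprime y (ℓ ^ (m + 1))),
      S ((x : ℚ) / ((ℓ : ℚ) ^ (m + 1))) = T (ℓ ^ m) := by
    rw [hTdef]
    refine Finset.sum_bij' (fun x _ => x / ℓ) (fun y _ => ℓ * y) ?_ ?_ ?_ ?_ ?_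
    · intro x hx
      obtain ⟨hx1, hx2⟩ := Finset.mem_filter.mp hx
      rw [hkey] at hx2
      refine Finset.mem_range.mpr ?_
      rw [Nat.div_lt_iff_lt_mul hlpos, ← pow_succ]
      exact Finset.mem_range.mp hx1
    · intro y hy
      refine Finset.mem_filter.mpr ⟨Finset.mem_range.mpr ?_, ?_⟩
      · rw [pow_succ']
        exact (Nat.mul_lt_mul_left hlpos).mpr (Finset.mem_range.mp hy)
      · rw [hkey]; exact Dvd.intro y rfl
    · intro x hx
      exact Nat.mul_div_cancel' ((hkey x).mp (Finset.mem_filter.mp hx).2)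
    · intro y hy
      exact Nat.mul_div_cancel_left y hlpos
    · intro x hx
      obtain ⟨y, rfl⟩ := (hkey x).mp (Finset.mem_filter.mp hx).2
      simp only [Nat.mul_div_cancel_left y hlpos]
      congr 1
      have hl0 : (ℓ : ℚ) ≠ 0 := Nat.cast_ne_zero.mpr hlpos.ne'
      push_cast
      rw [pow_succ']
      field_simp
  -- splitting
  have hsplit := Finset.sum_filter_add_sum_filter_not (range (ℓ ^ (m + 1)))
    (fun y => Nat.Coprime y (ℓ ^ (m + 1))) (fun x => S ((x : ℚ) / ((ℓ : ℚ) ^ (m + 1))))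
  have hTcast : T (ℓ ^ (m + 1)) = ∑ x ∈ range (ℓ ^ (m + 1)), S ((x : ℚ) / ((ℓ : ℚ) ^ (m + 1))) := by
    rw [hTdef]; push_cast; rfl
  have hmain : ∑ x : (ZMod (ℓ ^ (m + 1)))ˣ,
      S (((x : ZMod (ℓ ^ (m + 1))).val : ℚ) / ((ℓ : ℚ) ^ (m + 1)))
      = T (ℓ ^ (m + 1)) - T (ℓ ^ m) := by
    rw [hU, ← hNC, hTcast, ← hsplit]; ring
  rw [hmain]
  rcases m with _ | k
  · -- n = 1
    have hφ : ((ℓ ^ (0 + 1)).totient : ℝ) = (ℓ : ℝ) - 1 := by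
      rw [pow_succ, pow_zero, one_mul, Nat.totient_prime hl, Nat.cast_sub hl.one_lt.le,
        Nat.cast_one]
    have hG2 : G (0 + 2) = 1 + (ℓ : ℝ) := by
      rw [show (0 + 2 : ℕ) = 0 + 1 + 1 from rfl, hG, hG]
      simp [hGdef]
    have hG1 : G (0 + 1) = 1 := by rw [hG]; simp [hGdef]
    rw [hTk 0, hφ, hG2, hG1]
    simp only [pow_zero, ha1, Nat.add_sub_cancel, hT1]
    rw [if_neg (by omega : ¬ (2 ≤ 0 + 1))]
    push_cast [ha1]
    ring
  · -- n = k + 2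
    have h2n : 2 ≤ k + 1 + 1 := by omega
    rw [if_pos h2n]
    have hn2 : k + 1 + 1 - 2 = k := by omega
    rw [hn2]
    simp only [Nat.add_sub_cancel]
    rw [hTk (k + 1), hTk k]
    have hφ : ((ℓ ^ (k + 1 + 1)).totient : ℝ) = (ℓ : ℝ) ^ (k + 1) * ((ℓ : ℝ) - 1) := by
      rw [Nat.totient_prime_pow hl (by omega : 0 < k + 1 + 1)]
      push_cast [Nat.cast_sub hl.one_lt.le]
      ring
    rw [hφ, show k + 1 + 2 = k + 1 + 1 + 1 from rfl, hG (k + 1 + 1), hG (k + 1)]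
    ring
end

section
/- Assume L = 1/3 and that S takes all its values in (1/2)ℤ. Then the integer ∑_{x=1, gcd(x,m)=1}^{(m−1)/2} χ(x)·2S(x/m) is odd. (When S comes from the modular symbols of the elliptic curve E : y² + y = x³ + 2, this integer equals the algebraic L-value L(E^{(m)},1)/Ω_{E^{(m)}} of the quadratic twist E^{(m)}, which is therefore an odd integer.) -/
/-!
Write `S = t / 2` with `t` integer valued. Since `S` is even, `1`-periodic and vanishes at `0`,
`∑_{x<n} S(x/n)` equals the half-range sum `H(n) = ∑_{1 ≤ x ≤ (n-1)/2} t(x/n)` for odd `n`, so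
Manin's formula at `M = pq` reads `a(p)a(q) - (1+p)(1+q) = 3 (H(p) + H(q) + H(pq))`, an odd
number. Splitting the range of `H(pq)` according to divisibility by `p` or `q` gives
`H(pq) = D + H(q) + H(p)`, where `D` is the sum over `x` prime to `pq`; hence
`D ≡ H(p) + H(q) + H(pq)` is odd, and twisting by `χ = ±1` does not change the parity.
-/
open Finset

theorem sum_range_eq_two_nsmul_sum_Icc_of_reflect {M : Type*} [AddCommMonoid M] {n : ℕ}
    (hn : Odd n) (g : ℕ → M) (hg0 : g 0 = 0) (hg : ∀ x ≤ n, g (n - x) = g x) :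
    ∑ x ∈ range n, g x = 2 • ∑ x ∈ Icc 1 ((n - 1) / 2), g x := by
  obtain ⟨h, rfl⟩ := hn
  have hh : (2 * h + 1 - 1) / 2 = h := by omega
  have hIcc : ∑ x ∈ Icc 1 h, g x = ∑ i ∈ range h, g (i + 1) := by
    rw [← Ico_add_one_right_eq_Icc, sum_Ico_eq_sum_range]
    simp only [add_tsub_cancel_right, add_comm 1]
  have hupper : ∑ x ∈ Ico (h + 1) (2 * h + 1), g x = ∑ i ∈ range h, g (i + 1) := by
    rw [sum_Ico_eq_sum_range, ← sum_range_reflect (fun i => g (i + 1))]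
    refine sum_congr (by congr 1; omega) fun i hi => ?_
    rw [mem_range] at hi
    rw [← hg _ (by omega)]
    congr 1
    omega
  rw [hh, ← sum_range_add_sum_Ico _ (by omega : h + 1 ≤ 2 * h + 1), sum_range_succ', hg0, add_zero,
    hupper, hIcc, two_nsmul]

theorem Nat.sum_divisors_mul_primes {M : Type*} [AddCommMonoid M] (F : ℕ → M) {p q : ℕ}
    (hp : p.Prime) (hq : q.Prime) (hpq : p ≠ q) :
    ∑ l ∈ (p * q).divisors, F l = F 1 + F p + F q + F (p * q) := by
  have hinj := ((Nat.coprime_primes hp hq).2 hpq).mul_injOn_divisors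
  rw [Nat.divisors_mul, Finset.mul_def, sum_image hinj, sum_product, hp.sum_divisors,
    hq.sum_divisors, hq.sum_divisors]
  simp only [mul_one, one_mul]
  abel

theorem Finset.odd_sum_mul_iff_of_eq_one_or_neg_one {ι : Type*} {s : Finset ι} {ε f : ι → ℤ}
    (hε : ∀ x ∈ s, ε x = 1 ∨ ε x = -1) :
    Odd (∑ x ∈ s, ε x * f x) ↔ Odd (∑ x ∈ s, f x) := by
  have heven : Even (∑ x ∈ s, (ε x - 1) * f x) := by
    refine even_sum _ fun x hx => ?_
    rcases hε x hx with h | h <;> simp [h, parity_simps]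
  have hsplit : ∑ x ∈ s, ε x * f x = ∑ x ∈ s, f x + ∑ x ∈ s, (ε x - 1) * f x := by
    rw [← sum_add_distrib]
    exact sum_congr rfl fun x _ => by ring
  simp only [hsplit, Int.odd_add, heven, iff_true]

section HalfRangeSum

variable {M : Type*} [AddCommMonoid M]

def halfRangeSum (f : ℚ → M) (n : ℕ) : M :=
  ∑ x ∈ Icc 1 ((n - 1) / 2), f (x / n)

theorem sum_range_div_eq_two_nsmul_halfRangeSum {f : ℚ → M} (hf0 : f 0 = 0)
    (hfneg : ∀ β, f (-β) = f β) (hfper : ∀ β, f (β + 1) = f β) {n : ℕ} (hn : Odd n) :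
    ∑ x ∈ range n, f (x / n) = 2 • halfRangeSum f n := by
  refine sum_range_eq_two_nsmul_sum_Icc_of_reflect hn _ (by simpa using hf0) fun x hx => ?_
  have hn0 : (n : ℚ) ≠ 0 := by exact_mod_cast hn.pos.ne'
  rw [← hfneg, ← hfper, Nat.cast_sub hx]
  congr 1
  field_simp
  ring

theorem mul_mem_Icc_one_half_mul_iff {p q k : ℕ} (hp : 0 < p) :
    p * k ∈ Icc 1 ((p * q - 1) / 2) ↔ k ∈ Icc 1 ((q - 1) / 2) := by
  simp only [mem_Icc, Nat.le_div_iff_mul_le two_pos, Nat.one_le_iff_ne_zero, mul_ne_zero_iff,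
    ne_eq, hp.ne', not_false_eq_true, true_and]
  refine and_congr_right fun hk => ?_
  have hpk : 0 < p * (k * 2) := Nat.mul_pos hp (by omega)
  calc p * k * 2 ≤ p * q - 1 ↔ p * (k * 2) < p * q := by rw [mul_assoc]; omega
    _ ↔ k * 2 < q := Nat.mul_lt_mul_left hp
    _ ↔ k * 2 ≤ q - 1 := by omega

theorem sum_filter_dvd_eq_halfRangeSum (f : ℚ → M) {p q : ℕ} (hp : 0 < p) :
    ∑ x ∈ (Icc 1 ((p * q - 1) / 2)).filter (p ∣ ·), f (x / (p * q : ℕ)) = halfRangeSum f q := by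
  have himage :
      (Icc 1 ((p * q - 1) / 2)).filter (p ∣ ·) = (Icc 1 ((q - 1) / 2)).image (p * ·) := by
    ext x
    simp only [mem_filter, mem_image]
    constructor
    · rintro ⟨hx, k, rfl⟩
      exact ⟨k, (mul_mem_Icc_one_half_mul_iff hp).1 hx, rfl⟩
    · rintro ⟨k, hk, rfl⟩
      exact ⟨(mul_mem_Icc_one_half_mul_iff hp).2 hk, dvd_mul_right p k⟩
  have hp0 : (p : ℚ) ≠ 0 := by exact_mod_cast hp.ne'
  rw [himage, sum_image fun _ _ _ _ h => Nat.eq_of_mul_eq_mul_left hp h, halfRangeSum]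
  refine sum_congr rfl fun k _ => ?_
  push_cast
  rw [mul_div_mul_left _ _ hp0]

theorem halfRangeSum_mul_primes (f : ℚ → M) {p q : ℕ} (hp : p.Prime) (hq : q.Prime)
    (hpq : p ≠ q) :
    halfRangeSum f (p * q) =
      ∑ x ∈ (Icc 1 ((p * q - 1) / 2)).filter (fun x => Nat.gcd x (p * q) = 1),
          f (x / (p * q : ℕ)) + (halfRangeSum f q + halfRangeSum f p) := by
  have hnot : (Icc 1 ((p * q - 1) / 2)).filter (fun x => ¬ Nat.gcd x (p * q) = 1) =
      (Icc 1 ((p * q - 1) / 2)).filter (p ∣ ·) ∪ (Icc 1 ((p * q - 1) / 2)).filter (q ∣ ·) := by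
    rw [← filter_or]
    refine filter_congr fun x _ => ?_
    rw [← Nat.coprime_iff_gcd_eq_one, Nat.coprime_mul_iff_right, Nat.coprime_comm,
      hp.coprime_iff_not_dvd, Nat.coprime_comm, hq.coprime_iff_not_dvd]
    tauto
  have hdisj : Disjoint ((Icc 1 ((p * q - 1) / 2)).filter (p ∣ ·))
      ((Icc 1 ((p * q - 1) / 2)).filter (q ∣ ·)) := by
    refine disjoint_filter.2 fun x hx hpx hqx => ?_
    have hpqx : p * q ∣ x := ((Nat.coprime_primes hp hq).2 hpq).mul_dvd_of_dvd_of_dvd hpx hqx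
    rw [mem_Icc] at hx
    have := Nat.le_of_dvd (by omega) hpqx
    omega
  have hq_filter := sum_filter_dvd_eq_halfRangeSum f hq.pos (q := p)
  rw [mul_comm q p] at hq_filter
  rw [halfRangeSum, ← sum_filter_add_sum_filter_not _ (fun x => Nat.gcd x (p * q) = 1), hnot,
    sum_union hdisj, sum_filter_dvd_eq_halfRangeSum f hp.pos, hq_filter]

end HalfRangeSum

theorem sum_range_div_eq_halfRangeSum {S : ℚ → ℝ} {t : ℚ → ℤ} (ht : ∀ β, S β = t β / 2)
    (hS0 : S 0 = 0) (hSneg : ∀ β, S (-β) = S β) (hSper : ∀ β, S (β + 1) = S β) {n : ℕ}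
    (hn : Odd n) :
    ∑ x ∈ range n, S (x / n) = halfRangeSum t n := by
  rw [sum_range_div_eq_two_nsmul_halfRangeSum hS0 hSneg hSper hn, halfRangeSum, halfRangeSum,
    smul_sum, Int.cast_sum]
  refine sum_congr rfl fun x _ => ?_
  rw [ht, two_nsmul]
  ring

theorem sub_sum_divisors_mul_primes_eq_three_mul {S : ℚ → ℝ} {t : ℚ → ℤ}
    (ht : ∀ β, S β = t β / 2) (hS0 : S 0 = 0) (hSneg : ∀ β, S (-β) = S β)
    (hSper : ∀ β, S (β + 1) = S β) {p q : ℕ} (hp : p.Prime) (hq : q.Prime) (hpq : p ≠ q)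
    (hp_odd : Odd p) (hq_odd : Odd q) {A : ℤ}
    (hManin : ((A : ℝ) - (∑ d ∈ (p * q).divisors, d : ℕ)) * (1 / 3) =
      ∑ l ∈ (p * q).divisors, ∑ x ∈ range l, S (x / l)) :
    A - (1 + p + q + p * q) =
      3 * (halfRangeSum t p + halfRangeSum t q + halfRangeSum t (p * q)) := by
  have hfold {n : ℕ} (hn : Odd n) := sum_range_div_eq_halfRangeSum ht hS0 hSneg hSper hn
  rw [Nat.sum_divisors_mul_primes _ hp hq hpq, Nat.sum_divisors_mul_primes _ hp hq hpq,
    hfold hp_odd, hfold hq_odd, hfold (hp_odd.mul hq_odd)] at hManin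
  simp only [range_one, sum_singleton, Nat.cast_zero, zero_div, hS0, zero_add] at hManin
  have hreal : ((A - (1 + p + q + p * q) : ℤ) : ℝ) =
      ((3 * (halfRangeSum t p + halfRangeSum t q + halfRangeSum t (p * q)) : ℤ) : ℝ) := by
    push_cast at hManin ⊢
    linarith
  exact_mod_cast hreal

theorem algebraic_L_value_of_quadratic_twist_is_odd_general
    (N : ℕ)
    (a : ℕ → ℤ)
    (hamul : ∀ m k : ℕ, Nat.Coprime m k → a (m * k) = a m * a k)
    (S : ℚ → ℝ)
    (hS0 : S 0 = 0) (hSneg : ∀ β : ℚ, S (-β) = S β) (hSper : ∀ β : ℚ, S (β + 1) = S β)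
    (L : ℝ)
    (hL : ∀ M : ℕ, 0 < M → Nat.Coprime M N →
      ((a M : ℝ) - (∑ d ∈ Nat.divisors M, d : ℕ)) * L =
        ∑ l ∈ Nat.divisors M, ∑ x ∈ Finset.range l, S ((x : ℚ) / (l : ℚ)))
    (hL3 : L = 1 / 3)
    (hhalf : ∀ β : ℚ, ∃ c : ℤ, S β = (c : ℝ) / 2)
    (p q : ℕ) (hp : p.Prime) (hq : q.Prime) (hpq : p ≠ q)
    (hpN : ¬(p ∣ N)) (hqN : ¬(q ∣ N))
    (hp12 : p % 12 = 7) (hq12 : q % 12 = 7)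
    (hap : Odd (a p)) (haq : Odd (a q)) :
    ∃ c : ℤ, Odd c ∧
      (c : ℝ) =
        ∑ x ∈ (Finset.Icc 1 ((p * q - 1) / 2)).filter (fun x => Nat.gcd x (p * q) = 1),
          (jacobiSym (x : ℤ) (p * q) : ℝ) * (2 * S ((x : ℚ) / (p * q : ℚ))) := by
  choose t ht using hhalf
  have hp_odd : Odd p := Nat.odd_iff.2 (by omega)
  have hq_odd : Odd q := Nat.odd_iff.2 (by omega)
  have hManin := sub_sum_divisors_mul_primes_eq_three_mul ht hS0 hSneg hSper hp hq hpq hp_odd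
    hq_odd (hL3 ▸ hL (p * q) (Nat.mul_pos hp.pos hq.pos)
      ((hp.coprime_iff_not_dvd.2 hpN).mul_left (hq.coprime_iff_not_dvd.2 hqN)))
  rw [hamul p q ((Nat.coprime_primes hp hq).2 hpq)] at hManin
  have hsplit := halfRangeSum_mul_primes t hp hq hpq
  have hD : Odd (∑ x ∈ (Icc 1 ((p * q - 1) / 2)).filter (fun x => Nat.gcd x (p * q) = 1),
      t (x / (p * q : ℕ))) := by
    have := Int.odd_iff.1 (hap.mul haq)
    have := Int.odd_iff.1 (by exact_mod_cast hp_odd.mul hq_odd : Odd ((p : ℤ) * q))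
    have := Int.odd_iff.1 (by exact_mod_cast hp_odd : Odd (p : ℤ))
    have := Int.odd_iff.1 (by exact_mod_cast hq_odd : Odd (q : ℤ))
    rw [Int.odd_iff]
    omega
  refine ⟨∑ x ∈ (Icc 1 ((p * q - 1) / 2)).filter (fun x => Nat.gcd x (p * q) = 1),
    jacobiSym x (p * q) * t (x / (p * q : ℕ)),
    (odd_sum_mul_iff_of_eq_one_or_neg_one fun x hx => ?_).2 hD, ?_⟩
  · exact jacobiSym.eq_one_or_neg_one (by rw [Int.gcd_natCast_natCast]; exact (mem_filter.1 hx).2)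
  · push_cast
    refine sum_congr rfl fun x _ => ?_
    rw [ht]
    ring

/-- With `L = 1/3` and `S` taking values in `(1/2)ℤ`, the integer
`∑_{x=1, gcd(x,m)=1}^{(m−1)/2} χ(x)·2S(x/m)` is odd, where `m = pq` and `χ` is the Jacobi
symbol modulo `m` (this integer is the algebraic `L`-value `L(E^{(m)},1)/Ω_{E^{(m)}}`). -/
theorem algebraic_L_value_of_quadratic_twist_is_odd
    (N : ℕ) (hN : Odd N)
    (a : ℕ → ℤ) (ha1 : a 1 = 1)
    (hamul : ∀ m k : ℕ, Nat.Coprime m k → a (m * k) = a m * a k)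
    (S : ℚ → ℝ)
    (hS0 : S 0 = 0) (hSneg : ∀ β : ℚ, S (-β) = S β) (hSper : ∀ β : ℚ, S (β + 1) = S β)
    (hHecke : ∀ ℓ : ℕ, ℓ.Prime → ¬(ℓ ∣ N) → ∀ β : ℚ, Nat.Coprime β.den N →
      ∑ x ∈ Finset.range ℓ, S ((β + (x : ℚ)) / (ℓ : ℚ)) =
        (a ℓ : ℝ) * S β - S ((ℓ : ℚ) * β) + ∑ x ∈ Finset.range ℓ, S ((x : ℚ) / (ℓ : ℚ)))
    (L : ℝ)
    (hL : ∀ M : ℕ, 0 < M → Nat.Coprime M N →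
      ((a M : ℝ) - (∑ d ∈ Nat.divisors M, d : ℕ)) * L =
        ∑ l ∈ Nat.divisors M, ∑ x ∈ Finset.range l, S ((x : ℚ) / (l : ℚ)))
    (hL3 : L = 1 / 3)
    (hhalf : ∀ β : ℚ, ∃ c : ℤ, S β = (c : ℝ) / 2)
    (p q : ℕ) (hp : p.Prime) (hq : q.Prime) (hpq : p ≠ q)
    (hpN : ¬(p ∣ N)) (hqN : ¬(q ∣ N))
    (hp12 : p % 12 = 7) (hq12 : q % 12 = 7)
    (hap : Odd (a p)) (haq : Odd (a q)) :
    ∃ c : ℤ, Odd c ∧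
      (c : ℝ) =
        ∑ x ∈ (Finset.Icc 1 ((p * q - 1) / 2)).filter (fun x => Nat.gcd x (p * q) = 1),
          (jacobiSym (x : ℤ) (p * q) : ℝ) * (2 * S ((x : ℚ) / (p * q : ℚ))) :=
  algebraic_L_value_of_quadratic_twist_is_odd_general N a hamul S hS0 hSneg hSper L hL hL3 hhalf p q
    hp hq hpq hpN hqN hp12 hq12 hap haq
end
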